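/- arXiv:1304.1237 — 5 statements merged into one kernel-verified Lean document; each statement's English description precedes it below -/
import Mathlib

section
/- Let n and r be integers with 2 ≤ r ≤ n and n ≥ 3, and let K be a field. Then the toric ideal I_{A_{n,r}} is not generated by its homogeneous elements of degree at most two; consequently, every set of homogeneous generators of I_{A_{n,r}} contains an element of degree three. -/
/-- The monomial map `π_{n,r}` of the `(n,r)`-Birkhoff model:
`p(σ) ↦ ∏_{j=1}^r ψ_{j,σ(j)}`. -/
noncomputable def birkhoffHom (n r : ℕ) (K : Type) [Field K] :
    MvPolynomial (Fin r ↪ Fin n) K →ₐ[K] MvPolynomial (Fin r × Fin n) K :=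
  MvPolynomial.aeval fun σ => ∏ j : Fin r, MvPolynomial.X (j, σ j)

/-- The toric ideal `I_{A_{n,r}}` of the `(n,r)`-Birkhoff model: the kernel of `π_{n,r}`. -/
noncomputable def toricIdeal (n r : ℕ) (K : Type) [Field K] :
    Ideal (MvPolynomial (Fin r ↪ Fin n) K) :=
  RingHom.ker (birkhoffHom n r K)

/-!
Let `c = (0 1 2)` act on columns, let `σᵢ` be `cⁱ` restricted to the first `r` rows (indices
mod 3), and let `s` swap the first two rows. Every row of `σ₀, σ₁, σ₂` and of
`σ₀ ∘ s, σ₁ ∘ s, σ₂ ∘ s` meets the same columns, so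
`p(σ₀)p(σ₁)p(σ₂) - p(σ₀ ∘ s)p(σ₁ ∘ s)p(σ₂ ∘ s)` lies in the toric ideal, and the two monomials
differ because `r ≥ 2`.

Every proper divisor of `p(σ₀)p(σ₁)p(σ₂)` divides some `p(σᵢ)p(σᵢ₊₁)`, and this quadratic monomial
is alone in its fiber of `π`: the relations `σᵢ(j + 1) = σᵢ₊₁(j)` chain the rows together, so a
monomial `p(ε)p(ζ)` with the same image cannot mix rows of `σᵢ` with rows of `σᵢ₊₁`. A kernel
element has zero coefficient at a monomial that is alone in its fiber, so homogeneous elements of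
the toric ideal of degree `≠ 3` lie in the monomial ideal of the non-divisors of
`p(σ₀)p(σ₁)p(σ₂)`, and so does the ideal they generate; the cubic binomial does not.
-/

open MvPolynomial Finsupp

namespace Finsupp

variable {σ : Type*}

theorem exists_eq_single_add_single_of_degree_eq_two {m : σ →₀ ℕ} (h : m.degree = 2) :
    ∃ a b, m = single a 1 + single b 1 := by
  classical
  obtain ⟨a, b, hab⟩ := Multiset.card_eq_two.mp <| by
    rw [← h, degree_apply, card_toMultiset]; rfl
  refine ⟨a, b, ?_⟩
  rw [← toMultiset_toFinsupp m, hab, Multiset.insert_eq_cons, ← Multiset.singleton_add,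
    Multiset.toFinsupp_add, Multiset.toFinsupp_singleton, Multiset.toFinsupp_singleton]

theorem le_of_le_single_add_of_apply_lt {b p : σ →₀ ℕ} {x : σ} (hle : b ≤ single x 1 + p)
    (hlt : b x < (single x 1 + p : σ →₀ ℕ) x) : b ≤ p := by
  classical
  intro y
  have := hle y
  by_cases hy : x = y
  · subst hy; simp only [coe_add, Pi.add_apply, single_eq_same] at hlt; omega
  · simpa [single_apply, hy] using this

theorem eq_of_map_eq_of_le {F N : Type*} [Add N] [FunLike F (σ →₀ ℕ) N]
    [AddHomClass F (σ →₀ ℕ) N] (f : F) {b b' : σ →₀ ℕ}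
    (hb' : ∀ m, f m = f b' → m = b') (hle : b ≤ b') : ∀ m, f m = f b → m = b := by
  obtain ⟨c, rfl⟩ := le_iff_exists_add.mp hle
  intro m hm
  exact add_right_cancel (hb' (m + c) (by rw [map_add, map_add, hm]))

end Finsupp

theorem Finset.sum_range_three_add_of_periodic {M : Type*} [AddCommMonoid M] {f : ℕ → M}
    (hf : ∀ i, f (i + 3) = f i) (i : ℕ) :
    ∑ l ∈ Finset.range 3, f (i + l) = ∑ l ∈ Finset.range 3, f l := by
  induction i with
  | zero => simp
  | succ i ih =>
    rw [← ih]
    simp only [Finset.sum_range_succ, Finset.sum_range_zero, zero_add, add_zero]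
    rw [show i + 1 + 2 = i + 3 by omega, hf, show i + 1 + 1 = i + 2 by omega]
    abel

namespace MvPolynomial

variable {σ τ R : Type*} [CommSemiring R]

theorem aeval_monomial_eq_monomial_linearCombination (A : σ → τ →₀ ℕ) (m : σ →₀ ℕ) (a : R) :
    aeval (fun s => monomial (A s) (1 : R)) (monomial m a) =
      monomial (linearCombination ℕ A m) a := by
  rw [aeval_monomial, linearCombination_apply, monomial_finsupp_sum_index, algebraMap_eq]
  simp only [monomial_pow, one_pow]

theorem coeff_eq_zero_of_aeval_eq_zero (A : σ → τ →₀ ℕ) {g : MvPolynomial σ R}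
    (hg : aeval (fun s => monomial (A s) (1 : R)) g = 0) {b : σ →₀ ℕ}
    (hb : ∀ m, linearCombination ℕ A m = linearCombination ℕ A b → m = b) :
    coeff b g = 0 := by
  classical
  have h := congrArg (coeff (linearCombination ℕ A b)) hg
  rw [g.as_sum, map_sum, coeff_sum, coeff_zero] at h
  simp_rw [aeval_monomial_eq_monomial_linearCombination, coeff_monomial] at h
  rwa [Finset.sum_eq_single b (fun m _ hm => if_neg fun h => hm (hb m h))
    (fun hb => by rw [if_pos rfl, notMem_support_iff.mp hb]), if_pos rfl] at h

theorem mem_span_monomial_not_le_iff {e : σ →₀ ℕ} {f : MvPolynomial σ R} :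
    f ∈ Ideal.span ((fun s => monomial s (1 : R)) '' {m | ¬m ≤ e}) ↔ ∀ b ≤ e, coeff b f = 0 := by
  rw [mem_ideal_span_monomial_image]
  refine ⟨fun h b hb => by_contra fun hc => ?_, fun h b hb => ⟨b, fun hle => ?_, le_rfl⟩⟩
  · obtain ⟨c, hc, hcb⟩ := h b (mem_support_iff.mpr hc)
    exact hc (hcb.trans hb)
  · exact mem_support_iff.mp hb (h b hle)

end MvPolynomial

namespace Birkhoff

variable {n r : ℕ}

noncomputable def exponent (σ : Fin r ↪ Fin n) : Fin r × Fin n →₀ ℕ :=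
  ∑ j, single (j, σ j) 1

theorem exponent_apply (σ : Fin r ↪ Fin n) (j : Fin r) (k : Fin n) :
    exponent σ (j, k) = if σ j = k then 1 else 0 := by
  classical
  simp [exponent, finsetSum_apply, single_apply, Prod.ext_iff, ite_and]

theorem birkhoffHom_eq_aeval (K : Type) [Field K] :
    birkhoffHom n r K = aeval fun σ => monomial (exponent σ) (1 : K) := by
  rw [birkhoffHom]
  congr 1
  funext σ
  rw [exponent, monomial_sum_one]
  rfl

theorem degree_exponent (σ : Fin r ↪ Fin n) : (exponent σ).degree = r := by
  simp [exponent]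

theorem degree_linearCombination_exponent (m : (Fin r ↪ Fin n) →₀ ℕ) :
    (linearCombination ℕ exponent m).degree = r * m.degree := by
  induction m using Finsupp.induction_linear with
  | zero => simp
  | add f g hf hg => rw [map_add, map_add, hf, hg, map_add, mul_add]
  | single σ k => rw [linearCombination_single, map_nsmul, degree_exponent, degree_single,
      smul_eq_mul, mul_comm]

theorem eq_or_swap_of_exponent_add_eq {α β ε ζ : Fin r ↪ Fin n}
    (h : exponent ε + exponent ζ = exponent α + exponent β) (j : Fin r) :
    (ε j = α j ∧ ζ j = β j) ∨ (ε j = β j ∧ ζ j = α j) := by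
  classical
  have hrow : single (ε j) 1 + single (ζ j) 1 = single (α j) (1 : ℕ) + single (β j) 1 := by
    ext k
    simpa [exponent_apply, single_apply] using DFunLike.congr_fun h (j, k)
  rcases (single_add_single_eq_single_add_single one_ne_zero one_ne_zero).mp hrow with
    h | ⟨-, h⟩ | ⟨h, -⟩
  · exact Or.inl h
  · exact Or.inr h
  · exact absurd h two_ne_zero

theorem eq_and_eq_of_chain (hr : 0 < r) {α β ε ζ : Fin r ↪ Fin n}
    (hrows : ∀ j, (ε j = α j ∧ ζ j = β j) ∨ (ε j = β j ∧ ζ j = α j))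
    (hchain : ∀ j : Fin r, j.val ≠ 0 →
      α j = β j ∨ ∃ j' : Fin r, j'.val + 1 = j.val ∧ α j = β j')
    (h0 : ε ⟨0, hr⟩ = α ⟨0, hr⟩ ∧ ζ ⟨0, hr⟩ = β ⟨0, hr⟩) : ε = α ∧ ζ = β := by
  suffices h : ∀ k (j : Fin r), j.val = k → ε j = α j ∧ ζ j = β j from
    ⟨DFunLike.ext _ _ fun j => (h _ j rfl).1, DFunLike.ext _ _ fun j => (h _ j rfl).2⟩
  intro k
  induction k with
  | zero =>
    intro j hj
    obtain rfl : j = ⟨0, hr⟩ := Fin.ext hj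
    exact h0
  | succ k ih =>
    intro j hj
    rcases hchain j (by omega) with hαβ | ⟨j', hj', hlink⟩
    · exact (hrows j).elim id fun h => ⟨h.1.trans hαβ.symm, h.2.trans hαβ⟩
    · refine (hrows j).resolve_right fun h => ?_
      -- otherwise `ζ j = α j = β j' = ζ j'`
      have := ζ.injective (h.2.trans (hlink.trans (ih j' (by omega)).2.symm))
      omega

def swapRows (hr : 2 ≤ r) : Equiv.Perm (Fin r) := Equiv.swap ⟨0, by omega⟩ ⟨1, hr⟩

section Cycle

variable (hn : 3 ≤ n)

def threeCycle : Equiv.Perm (Fin n) := Fin.cycleRange ⟨2, hn⟩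

theorem threeCycle_val (x : Fin n) :
    (threeCycle hn x).val = if x.val < 2 then x.val + 1 else if x.val = 2 then 0 else x.val := by
  rcases lt_trichotomy x.val 2 with h | h | h
  · rw [if_pos h]; exact Fin.coe_cycleRange_of_lt h
  · rw [if_neg (by omega), if_pos h, threeCycle, Fin.coe_cycleRange_of_le (Fin.le_def.mpr h.le),
      if_pos (Fin.ext h)]
  · rw [if_neg (by omega), if_neg (by omega), threeCycle, Fin.cycleRange_of_gt h]

theorem threeCycle_pow_three : threeCycle hn ^ 3 = 1 := by
  ext x
  simp only [pow_succ, pow_zero, one_mul, Equiv.Perm.mul_apply, Equiv.Perm.one_apply,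
    threeCycle_val]
  split_ifs <;> omega

theorem sum_threeCycle_pow_apply_threeCycle {M : Type*} [AddCommMonoid M] (f : Fin n → M)
    (x : Fin n) :
    ∑ i ∈ Finset.range 3, f ((threeCycle hn ^ i) (threeCycle hn x)) =
      ∑ i ∈ Finset.range 3, f ((threeCycle hn ^ i) x) := by
  rw [← Finset.sum_range_three_add_of_periodic (f := fun i => f ((threeCycle hn ^ i) x)) _ 1]
  · simp only [add_comm 1, pow_succ, Equiv.Perm.mul_apply]
  · intro i; rw [pow_add, threeCycle_pow_three, mul_one]

variable (hrn : r ≤ n)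

def cycleEmb (i : ℕ) : Fin r ↪ Fin n :=
  (Fin.castLEEmb hrn).trans (threeCycle hn ^ i).toEmbedding

theorem cycleEmb_apply (i : ℕ) (j : Fin r) :
    cycleEmb hn hrn i j = (threeCycle hn ^ i) (Fin.castLE hrn j) := rfl

theorem cycleEmb_add_three (i : ℕ) : cycleEmb hn hrn (i + 3) = cycleEmb hn hrn i := by
  rw [cycleEmb, cycleEmb, pow_add, threeCycle_pow_three, mul_one]

theorem cycleEmb_chain (i : ℕ) (j : Fin r) (hj : j.val ≠ 0) :
    cycleEmb hn hrn i j = cycleEmb hn hrn (i + 1) j ∨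
      ∃ j' : Fin r, j'.val + 1 = j.val ∧ cycleEmb hn hrn i j = cycleEmb hn hrn (i + 1) j' := by
  simp only [cycleEmb_apply, pow_succ, Equiv.Perm.mul_apply]
  by_cases h3 : 3 ≤ j.val
  · left
    congr 1
    ext
    rw [threeCycle_val, Fin.val_castLE]
    split_ifs <;> omega
  · right
    refine ⟨⟨j.val - 1, by omega⟩, by simp; omega, ?_⟩
    congr 1
    ext
    rw [threeCycle_val]
    split_ifs <;> simp_all <;> omega

theorem eq_of_linearCombination_eq_cycleEmb_pair (hr : 0 < r) (i : ℕ)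
    (m : (Fin r ↪ Fin n) →₀ ℕ)
    (hm : linearCombination ℕ exponent m = linearCombination ℕ exponent
      (single (cycleEmb hn hrn i) 1 + single (cycleEmb hn hrn (i + 1)) 1)) :
    m = single (cycleEmb hn hrn i) 1 + single (cycleEmb hn hrn (i + 1)) 1 := by
  have hdeg : m.degree = 2 := by
    have := congrArg degree hm
    rw [degree_linearCombination_exponent, degree_linearCombination_exponent, map_add,
      degree_single, degree_single] at this
    exact Nat.eq_of_mul_eq_mul_left hr this
  obtain ⟨ε, ζ, rfl⟩ := exists_eq_single_add_single_of_degree_eq_two hdeg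
  simp only [map_add, linearCombination_single, one_smul] at hm
  have hrows := eq_or_swap_of_exponent_add_eq hm
  rcases hrows ⟨0, hr⟩ with h0 | h0
  · obtain ⟨rfl, rfl⟩ := eq_and_eq_of_chain hr hrows (cycleEmb_chain hn hrn i) h0
    rfl
  · obtain ⟨rfl, rfl⟩ := eq_and_eq_of_chain hr (fun j => (hrows j).symm.imp And.symm And.symm)
      (cycleEmb_chain hn hrn i) h0.symm
    exact add_comm _ _

noncomputable def cubic : (Fin r ↪ Fin n) →₀ ℕ :=
  ∑ i ∈ Finset.range 3, single (cycleEmb hn hrn i) 1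

theorem exists_le_cycleEmb_pair_of_lt_cubic {b : (Fin r ↪ Fin n) →₀ ℕ} (hb : b < cubic hn hrn) :
    ∃ i, b ≤ single (cycleEmb hn hrn i) 1 + single (cycleEmb hn hrn (i + 1)) 1 := by
  classical
  obtain ⟨hle, x, hx⟩ := Finsupp.lt_def.mp hb
  obtain ⟨i, -, hi⟩ : ∃ i ∈ Finset.range 3, single (cycleEmb hn hrn i) 1 x ≠ 0 := by
    refine Finset.exists_ne_zero_of_sum_ne_zero ?_
    rw [← finsetSum_apply]
    exact (Nat.zero_le _).trans_lt hx |>.ne'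
  obtain rfl : cycleEmb hn hrn i = x := by by_contra h; exact hi (single_eq_of_ne (Ne.symm h))
  have hsplit : cubic hn hrn = single (cycleEmb hn hrn i) 1 +
      (single (cycleEmb hn hrn (i + 1)) 1 + single (cycleEmb hn hrn (i + 2)) 1) := by
    rw [cubic, ← Finset.sum_range_three_add_of_periodic
      (f := fun l => single (cycleEmb hn hrn l) 1) (fun l => by rw [cycleEmb_add_three]) i]
    simp only [Finset.sum_range_succ, Finset.sum_range_zero, zero_add, add_zero, add_assoc]
  rw [hsplit] at hle hx
  exact ⟨i + 1, le_of_le_single_add_of_apply_lt hle hx⟩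

theorem linearCombination_cubic_apply (j : Fin r) (k : Fin n) :
    linearCombination ℕ exponent (cubic hn hrn) (j, k) =
      ∑ i ∈ Finset.range 3, if (threeCycle hn ^ i) (Fin.castLE hrn j) = k then 1 else 0 := by
  simp only [cubic, map_sum, finsetSum_apply, linearCombination_single, one_smul, exponent_apply,
    cycleEmb_apply]
  rfl

theorem degree_cubic : (cubic hn hrn).degree = 3 := by
  simp [cubic]

theorem coeff_eq_zero_of_le_cubic (hr : 0 < r) {K : Type} [Field K]
    {g : MvPolynomial (Fin r ↪ Fin n) K} (hg : g ∈ toricIdeal n r K) {d : ℕ}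
    (hd : g.IsHomogeneous d) (hd3 : d ≠ 3) {b : (Fin r ↪ Fin n) →₀ ℕ} (hb : b ≤ cubic hn hrn) :
    coeff b g = 0 := by
  by_contra hc
  have hdeg : b.degree = d := by_contra fun h => hc (hd.coeff_eq_zero h)
  have hlt : b < cubic hn hrn :=
    hb.lt_of_ne fun h => hd3 (by rw [← hdeg, h, degree_cubic])
  obtain ⟨i, hi⟩ := exists_le_cycleEmb_pair_of_lt_cubic hn hrn hlt
  rw [toricIdeal, RingHom.mem_ker, birkhoffHom_eq_aeval] at hg
  exact hc (coeff_eq_zero_of_aeval_eq_zero exponent hg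
    (eq_of_map_eq_of_le _ (eq_of_linearCombination_eq_cycleEmb_pair hn hrn hr i) hi))

variable (hr : 2 ≤ r)

noncomputable def twistedCubic : (Fin r ↪ Fin n) →₀ ℕ :=
  ∑ i ∈ Finset.range 3, single ((swapRows hr).toEmbedding.trans (cycleEmb hn hrn i)) 1

theorem linearCombination_twistedCubic_apply (j : Fin r) (k : Fin n) :
    linearCombination ℕ exponent (twistedCubic hn hrn hr) (j, k) =
      ∑ i ∈ Finset.range 3,
        if (threeCycle hn ^ i) (Fin.castLE hrn (swapRows hr j)) = k then 1 else 0 := by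
  simp only [twistedCubic, map_sum, finsetSum_apply, linearCombination_single, one_smul,
    exponent_apply, Function.Embedding.trans_apply, Equiv.coe_toEmbedding, cycleEmb_apply]

theorem linearCombination_twistedCubic :
    linearCombination ℕ exponent (twistedCubic hn hrn hr) =
      linearCombination ℕ exponent (cubic hn hrn) := by
  ext ⟨j, k⟩
  rw [linearCombination_twistedCubic_apply, linearCombination_cubic_apply]
  have h01 : Fin.castLE hrn ⟨1, hr⟩ = threeCycle hn (Fin.castLE hrn ⟨0, by omega⟩) := by
    ext; simp [threeCycle_val]
  by_cases hj0 : j = ⟨0, by omega⟩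
  · rw [hj0, swapRows, Equiv.swap_apply_left, h01]
    exact sum_threeCycle_pow_apply_threeCycle hn (fun y => if y = k then 1 else 0) _
  by_cases hj1 : j = ⟨1, hr⟩
  · rw [hj1, swapRows, Equiv.swap_apply_right, h01]
    exact (sum_threeCycle_pow_apply_threeCycle hn (fun y => if y = k then 1 else 0) _).symm
  rw [swapRows, Equiv.swap_apply_of_ne_of_ne hj0 hj1]

theorem cubic_ne_twistedCubic : cubic hn hrn ≠ twistedCubic hn hrn hr := by
  classical
  intro h
  have h0 : twistedCubic hn hrn hr (cycleEmb hn hrn 0) ≠ 0 := by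
    rw [← h]
    simp [cubic, Finset.sum_range_succ]
  rw [twistedCubic, finsetSum_apply] at h0
  obtain ⟨i, -, hi⟩ := Finset.exists_ne_zero_of_sum_ne_zero h0
  have heq : (swapRows hr).toEmbedding.trans (cycleEmb hn hrn i) = cycleEmb hn hrn 0 := by
    by_contra h; exact hi (single_eq_of_ne (Ne.symm h))
  have hrow0 := DFunLike.congr_fun heq ⟨0, by omega⟩
  have hrow1 := DFunLike.congr_fun heq ⟨1, hr⟩
  simp only [Function.Embedding.trans_apply, Equiv.coe_toEmbedding, swapRows,
    Equiv.swap_apply_left, Equiv.swap_apply_right, cycleEmb_apply, pow_zero, Equiv.Perm.one_apply]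
    at hrow0 hrow1
  have h01 : Fin.castLE hrn ⟨1, hr⟩ = threeCycle hn (Fin.castLE hrn ⟨0, by omega⟩) := by
    ext; simp [threeCycle_val]
  have hcomm : (threeCycle hn ^ i) (threeCycle hn (Fin.castLE hrn ⟨0, by omega⟩)) =
      threeCycle hn ((threeCycle hn ^ i) (Fin.castLE hrn ⟨0, by omega⟩)) := by
    rw [← Equiv.Perm.mul_apply, ← pow_succ, pow_succ', Equiv.Perm.mul_apply]
  -- `cⁱ` would swap `0` and `1` and commute with `c`, forcing `c 1 = 0`
  rw [← h01, hrow0, hrow1] at hcomm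
  have := congrArg Fin.val hcomm
  simp [threeCycle_val] at this

variable (K : Type) [Field K]

noncomputable def cubicBinomial : MvPolynomial (Fin r ↪ Fin n) K :=
  monomial (cubic hn hrn) 1 - monomial (twistedCubic hn hrn hr) 1

theorem cubicBinomial_mem_toricIdeal : cubicBinomial hn hrn hr K ∈ toricIdeal n r K := by
  rw [toricIdeal, RingHom.mem_ker, cubicBinomial, map_sub, birkhoffHom_eq_aeval,
    aeval_monomial_eq_monomial_linearCombination, aeval_monomial_eq_monomial_linearCombination,
    linearCombination_twistedCubic, sub_self]

variable {K}

theorem cubicBinomial_notMem_span {S : Set (MvPolynomial (Fin r ↪ Fin n) K)}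
    (hS : ∀ g ∈ S, g ∈ toricIdeal n r K ∧ ∃ d ≠ 3, g.IsHomogeneous d) :
    cubicBinomial hn hrn hr K ∉ Ideal.span S := by
  intro hmem
  have hle : Ideal.span S ≤ Ideal.span ((fun s => monomial s 1) '' {m | ¬m ≤ cubic hn hrn}) :=
    Ideal.span_le.mpr fun g hg => mem_span_monomial_not_le_iff.mpr fun b hb =>
      let ⟨hgI, _, hd3, hd⟩ := hS g hg
      coeff_eq_zero_of_le_cubic hn hrn (by omega) hgI hd hd3 hb
  have := mem_span_monomial_not_le_iff.mp (hle hmem) _ le_rfl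
  rw [cubicBinomial, coeff_sub, coeff_monomial, coeff_monomial, if_pos rfl,
    if_neg (cubic_ne_twistedCubic hn hrn hr).symm, sub_zero] at this
  exact one_ne_zero this

end Cycle

end Birkhoff

/-- For `2 ≤ r ≤ n` and `n ≥ 3`, the toric ideal `I_{A_{n,r}}` is not
generated by its homogeneous elements of degree at most two; consequently, every set of
homogeneous generators of `I_{A_{n,r}}` contains a (nonzero) element of degree three. -/
theorem toricIdeal_not_generated_in_degree_le_two
    (n r : ℕ) (hr : 2 ≤ r) (hrn : r ≤ n) (hn : 3 ≤ n) (K : Type) [Field K] :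
    (toricIdeal n r K ≠
      Ideal.span {f : MvPolynomial (Fin r ↪ Fin n) K |
        f ∈ toricIdeal n r K ∧ ∃ d ≤ 2, f.IsHomogeneous d}) ∧
    (∀ G : Set (MvPolynomial (Fin r ↪ Fin n) K),
      (∀ g ∈ G, ∃ d, g.IsHomogeneous d) →
      Ideal.span G = toricIdeal n r K →
      ∃ g ∈ G, g ≠ 0 ∧ g.IsHomogeneous 3) := by
  have hmem := Birkhoff.cubicBinomial_mem_toricIdeal hn hrn hr K
  refine ⟨fun h => ?_, fun G hG hspan => ?_⟩
  · refine Birkhoff.cubicBinomial_notMem_span hn hrn hr (fun g hg => ?_) (h ▸ hmem)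
    obtain ⟨hgI, d, hd, hgd⟩ := hg
    exact ⟨hgI, d, by omega, hgd⟩
  · by_contra! hno
    refine Birkhoff.cubicBinomial_notMem_span hn hrn hr
      (fun g hg => ⟨hspan ▸ Ideal.subset_span hg, ?_⟩) (hspan ▸ hmem)
    obtain ⟨d, hd⟩ := hG g hg
    by_cases hg0 : g = 0
    · exact ⟨0, by norm_num, hg0 ▸ isHomogeneous_zero _ _ _⟩
    · exact ⟨d, fun h3 => hno g hg hg0 (h3 ▸ hd), hd⟩
end

section
/- Let 1 ≤ r ≤ n and let T be an r×n matrix with nonnegative integer entries such that every row sum of T equals 2 and every column sum of T is at most 2. Then there exist proper votes W₁ and W₂ with T = W₁ + W₂. -/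
/-- A proper vote: an `r × n` integer matrix with all entries in `{0,1}`, every row sum
equal to `1`, and every column sum equal to `0` or `1`. -/
def IsProperVote (r n : ℕ) (V : Matrix (Fin r) (Fin n) ℤ) : Prop :=
  (∀ j k, V j k = 0 ∨ V j k = 1) ∧
  (∀ j, ∑ k, V j k = 1) ∧
  (∀ k, ∑ j, V j k = 0 ∨ ∑ j, V j k = 1)

/-- An improper vote: an `r × n` integer matrix with every row sum equal to `1`, every
column sum equal to `0` or `1`, exactly one entry equal to `-1`, and all other entries
in `{0,1}`. -/
def IsImproperVote (r n : ℕ) (V : Matrix (Fin r) (Fin n) ℤ) : Prop :=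
  (∀ j, ∑ k, V j k = 1) ∧
  (∀ k, ∑ j, V j k = 0 ∨ ∑ j, V j k = 1) ∧
  (∃ j' k', V j' k' = -1 ∧ ∀ j k, (j, k) ≠ (j', k') → V j k = 0 ∨ V j k = 1)

/-!
A proper vote is the 0–1 matrix of an injection `σ`. It therefore suffices to find an injection
`σ` with `T j (σ j) ≥ 1` for every row `j` whose image contains every column of sum `2`: then
`T - voteMatrix σ` is again a proper vote, its entries being at most `1` because the row sums
are `2`. Such a `σ` is a matching of the support graph of `T` covering all rows and all columns
of sum `2`, and Hall's condition for it follows by double counting the entries of `T` against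
the row sums `2` and the column sums `≤ 2`.
-/

open Finset Function

theorem exists_injective_forall_mem_and_subset_range {α β : Type*} [Fintype α] [Fintype β]
    [DecidableEq β] (t : α → Finset β) (H : Finset β)
    (hcard : Fintype.card α ≤ Fintype.card β)
    (hHall : ∀ S : Finset α, #S ≤ #(S.biUnion t))
    (hcover : ∀ S : Finset α, #S + #H ≤ Fintype.card α + #(H ∩ S.biUnion t)) :
    ∃ σ : α → β, Injective σ ∧ (∀ j, σ j ∈ t j) ∧ ↑H ⊆ Set.range σ := by
  -- Pad `α` with dummy vertices adjacent to exactly the targets outside `H`: a matching of the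
  -- padded graph is a bijection, and the dummies cannot use `H`.
  let t' : α ⊕ Fin (Fintype.card β - Fintype.card α) → Finset β := Sum.elim t fun _ => Hᶜ
  have hHall' : ∀ s, #s ≤ #(s.biUnion t') := by
    intro s
    have hleft : s.toLeft.biUnion t ⊆ s.biUnion t' := fun k hk => by
      obtain ⟨j, hj, hkj⟩ := mem_biUnion.mp hk
      exact mem_biUnion.mpr ⟨.inl j, mem_toLeft.mp hj, hkj⟩
    rw [← card_toLeft_add_card_toRight]
    rcases s.toRight.eq_empty_or_nonempty with hempty | ⟨i, hi⟩
    · rw [hempty, card_empty, add_zero]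
      exact (hHall _).trans (card_le_card hleft)
    · have hright : Hᶜ ⊆ s.biUnion t' := fun k hk =>
        mem_biUnion.mpr ⟨.inr i, mem_toRight.mp hi, hk⟩
      have hunion : #Hᶜ + #(H ∩ s.toLeft.biUnion t) ≤ #(s.biUnion t') := by
        rw [← card_union_of_disjoint (disjoint_compl_left.mono_right inter_subset_left)]
        exact card_le_card (union_subset hright (inter_subset_right.trans hleft))
      have hdummies := card_le_univ s.toRight
      rw [Fintype.card_fin] at hdummies
      rw [card_compl] at hunion
      have := hcover s.toLeft
      have := card_le_univ H
      omega
  obtain ⟨f, hf, hft⟩ := (all_card_le_biUnion_card_iff_exists_injective t').mp hHall'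
  refine ⟨f ∘ .inl, hf.comp Sum.inl_injective, fun j => hft (.inl j), fun k hk => ?_⟩
  have hbij : Bijective f := (Fintype.bijective_iff_injective_and_card f).mpr
    ⟨hf, by simp only [Fintype.card_sum, Fintype.card_fin]; omega⟩
  obtain ⟨x | i, rfl⟩ := hbij.surjective k
  · exact ⟨x, rfl⟩
  · exact absurd hk (mem_compl.mp (hft (.inr i)))

section RowSumTwo

variable {α β : Type*} {T : Matrix α β ℤ}

def rowSupport [Fintype β] (T : Matrix α β ℤ) (j : α) : Finset β := {k | T j k ≠ 0}

def heavyColumns [Fintype α] [Fintype β] (T : Matrix α β ℤ) : Finset β :=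
  {k | ∑ j, T j k = 2}

@[simp]
theorem mem_rowSupport [Fintype β] {j : α} {k : β} : k ∈ rowSupport T j ↔ T j k ≠ 0 := by
  simp [rowSupport]

@[simp]
theorem mem_heavyColumns [Fintype α] [Fintype β] {k : β} :
    k ∈ heavyColumns T ↔ ∑ j, T j k = 2 := by
  simp [heavyColumns]

theorem sum_sum_le_two_mul_card [Fintype α] (hpos : ∀ j k, 0 ≤ T j k)
    (hcol : ∀ k, ∑ j, T j k ≤ 2) (S : Finset α) (C : Finset β) :
    ∑ k ∈ C, ∑ j ∈ S, T j k ≤ 2 * #C :=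
  calc ∑ k ∈ C, ∑ j ∈ S, T j k ≤ ∑ _k ∈ C, (2 : ℤ) :=
        sum_le_sum fun k _ => (sum_le_univ_sum_of_nonneg fun j => hpos j k).trans (hcol k)
    _ = 2 * #C := by rw [sum_const, nsmul_eq_mul, mul_comm]

theorem sum_sum_eq_two_mul_card [Fintype β] (hrow : ∀ j, ∑ k, T j k = 2) (S : Finset α) :
    ∑ k, ∑ j ∈ S, T j k = 2 * #S := by
  rw [sum_comm, sum_congr rfl fun j _ => hrow j, sum_const, nsmul_eq_mul, mul_comm]

theorem sum_inter_biUnion_rowSupport [Fintype β] [DecidableEq β] (S : Finset α)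
    (C : Finset β) :
    ∑ k ∈ C ∩ S.biUnion (rowSupport T), ∑ j ∈ S, T j k = ∑ k ∈ C, ∑ j ∈ S, T j k := by
  refine sum_subset inter_subset_left fun k hkC hk => sum_eq_zero fun j hj => ?_
  by_contra hne
  exact hk (mem_inter.mpr ⟨hkC, mem_biUnion.mpr ⟨j, hj, mem_rowSupport.mpr hne⟩⟩)

theorem card_le_card_biUnion_rowSupport [Fintype α] [Fintype β] [DecidableEq β]
    (hpos : ∀ j k, 0 ≤ T j k) (hrow : ∀ j, ∑ k, T j k = 2) (hcol : ∀ k, ∑ j, T j k ≤ 2)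
    (S : Finset α) : #S ≤ #(S.biUnion (rowSupport T)) := by
  have hsupp := sum_inter_biUnion_rowSupport (T := T) S univ
  rw [univ_inter, sum_sum_eq_two_mul_card hrow] at hsupp
  have := sum_sum_le_two_mul_card hpos hcol S (S.biUnion (rowSupport T))
  rw [hsupp] at this
  exact_mod_cast (mul_le_mul_iff_right₀ two_pos).mp this

theorem card_add_card_heavyColumns_le [Fintype α] [Fintype β] [DecidableEq β]
    (hpos : ∀ j k, 0 ≤ T j k) (hrow : ∀ j, ∑ k, T j k = 2) (hcol : ∀ k, ∑ j, T j k ≤ 2)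
    (S : Finset α) :
    #S + #(heavyColumns T) ≤
      Fintype.card α + #(heavyColumns T ∩ S.biUnion (rowSupport T)) := by
  set H := heavyColumns T
  have hH : ∑ k ∈ H, ∑ j, T j k = 2 * #H := by
    rw [sum_congr rfl fun k hk => mem_heavyColumns.mp hk, sum_const, nsmul_eq_mul, mul_comm]
  have hlight : ∑ k ∈ Hᶜ, ∑ j ∈ S, T j k ≤ ∑ k ∈ Hᶜ, ∑ j, T j k :=
    sum_le_sum fun k _ => sum_le_univ_sum_of_nonneg fun j => hpos j k
  have htotal := sum_sum_eq_two_mul_card hrow (univ : Finset α)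
  rw [← sum_compl_add_sum H, hH, card_univ] at htotal
  have hS := sum_sum_eq_two_mul_card hrow S
  rw [← sum_compl_add_sum H, ← sum_inter_biUnion_rowSupport S H] at hS
  have hheavy := sum_sum_le_two_mul_card hpos hcol S (H ∩ S.biUnion (rowSupport T))
  have : (#S : ℤ) + #H ≤ Fintype.card α + #(H ∩ S.biUnion (rowSupport T)) := by linarith
  exact_mod_cast this

end RowSumTwo

section Votes

variable {r n : ℕ}

def voteMatrix {α β : Type*} [DecidableEq β] (σ : α → β) : Matrix α β ℤ :=
  Matrix.of fun j k => if σ j = k then 1 else 0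

@[simp]
theorem voteMatrix_apply {α β : Type*} [DecidableEq β] (σ : α → β) (j : α) (k : β) :
    voteMatrix σ j k = if σ j = k then 1 else 0 :=
  rfl

theorem sum_voteMatrix_col {α β : Type*} [Fintype α] [DecidableEq β] {σ : α → β}
    (hσ : Injective σ) (k : β) :
    ∑ j, voteMatrix σ j k = if k ∈ Set.range σ then 1 else 0 := by
  by_cases hk : k ∈ Set.range σ
  · obtain ⟨j₀, rfl⟩ := hk
    simp only [voteMatrix_apply]
    rw [if_pos (Set.mem_range_self j₀), Fintype.sum_eq_single j₀ fun j hj => if_neg (hσ.ne hj)]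
    exact if_pos rfl
  · simp only [voteMatrix_apply, if_neg hk]
    exact sum_eq_zero fun j _ => if_neg fun h => hk ⟨j, h⟩

theorem isProperVote_voteMatrix {σ : Fin r → Fin n} (hσ : Injective σ) :
    IsProperVote r n (voteMatrix σ) := by
  refine ⟨fun j k => ?_, fun j => by simp, fun k => ?_⟩
  · by_cases h : σ j = k <;> simp [h]
  · rw [sum_voteMatrix_col hσ]
    split_ifs <;> simp

theorem isProperVote_sub_voteMatrix {T : Matrix (Fin r) (Fin n) ℤ} {σ : Fin r → Fin n}
    (hpos : ∀ j k, 0 ≤ T j k) (hrow : ∀ j, ∑ k, T j k = 2) (hcol : ∀ k, ∑ j, T j k ≤ 2)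
    (hσ : Injective σ) (hσT : ∀ j, 0 < T j (σ j))
    (hcover : ↑(heavyColumns T) ⊆ Set.range σ) :
    IsProperVote r n (T - voteMatrix σ) := by
  refine ⟨fun j k => ?_, fun j => ?_, fun k => ?_⟩
  · have hσj := hσT j
    simp only [Matrix.sub_apply, voteMatrix_apply]
    split_ifs with h
    · subst h
      have := (single_le_sum (fun k _ => hpos j k) (mem_univ (σ j))).trans (hrow j).le
      omega
    · have := (add_le_sum (fun k _ => hpos j k) (mem_univ (σ j)) (mem_univ k) h).trans
        (hrow j).le
      have := hpos j k
      omega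
  · simp [Matrix.sub_apply, sum_sub_distrib, hrow]
  · simp only [Matrix.sub_apply, sum_sub_distrib, sum_voteMatrix_col hσ]
    split_ifs with hk
    · obtain ⟨j, rfl⟩ := hk
      have hhit : T j (σ j) ≤ ∑ i, T i (σ j) :=
        single_le_sum (fun i _ => hpos i (σ j)) (mem_univ j)
      have := hσT j
      have := hcol (σ j)
      omega
    · have hlight : ∑ j, T j k ≠ 2 := fun h => hk (hcover (mem_heavyColumns.mpr h))
      have hnonneg : 0 ≤ ∑ j, T j k := sum_nonneg fun j _ => hpos j k
      have := hcol k
      rw [sub_zero]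
      omega

end Votes

theorem sum_of_two_proper_votes_general
    (r n : ℕ) (hrn : r ≤ n)
    (T : Matrix (Fin r) (Fin n) ℤ)
    (hpos : ∀ j k, 0 ≤ T j k)
    (hrow : ∀ j, ∑ k, T j k = 2)
    (hcol : ∀ k, ∑ j, T j k ≤ 2) :
    ∃ W₁ W₂ : Matrix (Fin r) (Fin n) ℤ,
      IsProperVote r n W₁ ∧ IsProperVote r n W₂ ∧ T = W₁ + W₂ := by
  obtain ⟨σ, hσ, hσT, hcover⟩ :=
    exists_injective_forall_mem_and_subset_range (rowSupport T) (heavyColumns T)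
      (by simpa using hrn) (card_le_card_biUnion_rowSupport hpos hrow hcol)
      (card_add_card_heavyColumns_le hpos hrow hcol)
  have hσpos : ∀ j, 0 < T j (σ j) := fun j =>
    (hpos j (σ j)).lt_of_ne' (mem_rowSupport.mp (hσT j))
  exact ⟨voteMatrix σ, T - voteMatrix σ, isProperVote_voteMatrix hσ,
    isProperVote_sub_voteMatrix hpos hrow hcol hσ hσpos hcover, (add_sub_cancel _ _).symm⟩

/-- For `1 ≤ r ≤ n`, every `r × n` matrix with nonnegative integer
entries, all row sums equal to `2` and all column sums at most `2` is the sum of two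
proper votes. -/
theorem sum_of_two_proper_votes
    (r n : ℕ) (hr : 1 ≤ r) (hrn : r ≤ n)
    (T : Matrix (Fin r) (Fin n) ℤ)
    (hpos : ∀ j k, 0 ≤ T j k)
    (hrow : ∀ j, ∑ k, T j k = 2)
    (hcol : ∀ k, ∑ j, T j k ≤ 2) :
    ∃ W₁ W₂ : Matrix (Fin r) (Fin n) ℤ,
      IsProperVote r n W₁ ∧ IsProperVote r n W₂ ∧ T = W₁ + W₂ :=
  sum_of_two_proper_votes_general r n hrn T hpos hrow hcol
end

section
/- Let 1 ≤ r ≤ n, let V₁ be an improper vote and V₂ a proper vote such that V₁ + V₂ has all entries nonnegative. Then there exist proper votes W₁ and W₂ with W₁ + W₂ = V₁ + V₂. -/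
/-!
Each row `j` of `V₁ + V₂` is a nonnegative integer vector with sum `2`, hence a sum of two
standard basis vectors `e (f j) + e (g j)`, and each column sums to at most `2`. Reading row
`j` as an edge between the columns `f j` and `g j` gives a multigraph of maximum degree `2`.
Orient its edges so that every vertex is the tail of at most one edge and the head of at most
one edge: then the tails and the heads form two proper votes with sum `V₁ + V₂`.

The orientation is built edge by edge. Remove an edge at a vertex of degree one if there is one,
otherwise any edge, and orient the rest. In the first case the degree-one endpoint is untouched
by the rest, so the removed edge can be added back. In the second case all degrees are even,
so tails and heads balance at every vertex other than the two endpoints; as the total numbers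
of tails and heads agree, the endpoints are left with opposite roles and the edge fits between
them.
-/

open Finset Function Set

section Orientation

variable {ι α : Type*}

theorem card_filter_le_one_of_injOn [DecidableEq α] {p : ι → α} {E : Finset ι}
    (hp : InjOn p E) (k : α) :
    #{j ∈ E | p j = k} ≤ 1 :=
  card_le_one.2 fun a ha b hb => by
    rw [mem_filter] at ha hb
    exact hp ha.1 hb.1 (ha.2.trans hb.2.symm)

theorem injOn_update_insert [DecidableEq ι] {F : ι → α} {s : Set ι} {a : ι} {x : α}
    (ha : a ∉ s) (hF : InjOn F s) (hx : x ∉ F '' s) : InjOn (update F a x) (insert a s) := by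
  have hEq : EqOn (update F a x) F s := fun b hb =>
    update_of_ne (ne_of_mem_of_not_mem hb ha) _ _
  rw [Set.injOn_insert ha, hEq.injOn_iff, hEq.image_eq, update_self]
  exact ⟨hF, hx⟩

variable (f g : ι → α)

def endpointCount [DecidableEq α] (E : Finset ι) (k : α) : ℕ :=
  #{j ∈ E | f j = k} + #{j ∈ E | g j = k}

def IsOrientation (p q : ι → α) : Prop :=
  ∀ j, p j = f j ∧ q j = g j ∨ p j = g j ∧ q j = f j

variable {f g} {p q : ι → α}

theorem IsOrientation.card_add_card [DecidableEq α] (ho : IsOrientation f g p q) (E : Finset ι)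
    (k : α) :
    #{j ∈ E | p j = k} + #{j ∈ E | q j = k} = endpointCount f g E k := by
  simp only [endpointCount, card_filter, ← sum_add_distrib]
  refine sum_congr rfl fun j _ => ?_
  rcases ho j with ⟨hp, hq⟩ | ⟨hp, hq⟩ <;> rw [hp, hq]
  exact add_comm _ _

theorem IsOrientation.update [DecidableEq ι] (ho : IsOrientation f g p q) {j₀ : ι} {x y : α}
    (hxy : x = f j₀ ∧ y = g j₀ ∨ x = g j₀ ∧ y = f j₀) :
    IsOrientation f g (update p j₀ x) (update q j₀ y) := by
  intro j
  rcases eq_or_ne j j₀ with rfl | hj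
  · simpa using hxy
  · simpa [hj] using ho j

theorem endpointCount_erase_add [DecidableEq ι] [DecidableEq α] {E : Finset ι} {j₀ : ι}
    (hj₀ : j₀ ∈ E) (k : α) :
    endpointCount f g (E.erase j₀) k +
      ((if f j₀ = k then 1 else 0) + if g j₀ = k then 1 else 0) = endpointCount f g E k := by
  simp only [endpointCount, card_filter, ← add_sum_erase E _ hj₀]
  ring

theorem exists_mem_of_endpointCount_ne_zero [DecidableEq α] {E : Finset ι} {k : α}
    (hk : endpointCount f g E k ≠ 0) : ∃ j ∈ E, f j = k ∨ g j = k := by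
  by_contra! h
  simp_all [endpointCount]

theorem exists_orientation_insert [DecidableEq ι] [DecidableEq α] {E : Finset ι} {j₀ : ι}
    {x y : α} (hj₀ : j₀ ∉ E) (ho : IsOrientation f g p q) (hp : InjOn p E) (hq : InjOn q E)
    (hxy : x = f j₀ ∧ y = g j₀ ∨ x = g j₀ ∧ y = f j₀)
    (hx : #{j ∈ E | p j = x} = 0) (hy : #{j ∈ E | q j = y} = 0) :
    ∃ p q, IsOrientation f g p q ∧
      InjOn p ↑(insert j₀ E) ∧ InjOn q ↑(insert j₀ E) := by
  have hj₀' : j₀ ∉ (E : Set ι) := mod_cast hj₀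
  rw [card_filter_eq_zero_iff] at hx hy
  rw [coe_insert]
  refine ⟨update p j₀ x, update q j₀ y, ho.update hxy, injOn_update_insert hj₀' hp ?_,
    injOn_update_insert hj₀' hq ?_⟩
  · rintro ⟨j, hj, rfl⟩
    exact hx j hj rfl
  · rintro ⟨j, hj, rfl⟩
    exact hy j hj rfl

theorem IsOrientation.card_add_card_eq [Fintype α] [DecidableEq α] (ho : IsOrientation f g p q)
    {E : Finset ι} (hp : InjOn p E) (hq : InjOn q E) {a b : α} (hab : a ≠ b)
    (hdeg : ∀ k, k ≠ a → k ≠ b → endpointCount f g E k ≠ 1) :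
    #{j ∈ E | p j = a} + #{j ∈ E | p j = b} =
      #{j ∈ E | q j = a} + #{j ∈ E | q j = b} := by
  have hsum : ∑ k, ((#{j ∈ E | p j = k} : ℤ) - #{j ∈ E | q j = k}) = 0 := by
    rw [sum_sub_distrib, ← Nat.cast_sum, ← Nat.cast_sum,
      ← card_eq_sum_card_fiberwise (fun _ _ => mem_univ _),
      ← card_eq_sum_card_fiberwise (fun _ _ => mem_univ _), sub_self]
  rw [Fintype.sum_eq_add a b hab fun k ⟨hka, hkb⟩ => ?_] at hsum
  · omega
  have := ho.card_add_card E k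
  have := card_filter_le_one_of_injOn hp k
  have := card_filter_le_one_of_injOn hq k
  have := hdeg k hka hkb
  omega

theorem exists_free_endpoints [Fintype α] [DecidableEq ι] [DecidableEq α] {E : Finset ι}
    {j₀ : ι} (hj₀ : j₀ ∈ E) (hdeg : ∀ k, endpointCount f g E k ≤ 2)
    (hchoice : endpointCount f g E (f j₀) = 1 ∨ endpointCount f g E (g j₀) = 1 ∨
      ∀ k, endpointCount f g E k ≠ 1)
    (ho : IsOrientation f g p q) (hp : InjOn p ↑(E.erase j₀)) (hq : InjOn q ↑(E.erase j₀)) :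
    ∃ x y, (x = f j₀ ∧ y = g j₀ ∨ x = g j₀ ∧ y = f j₀) ∧
      #{j ∈ E.erase j₀ | p j = x} = 0 ∧ #{j ∈ E.erase j₀ | q j = y} = 0 := by
  have hp₁ := card_filter_le_one_of_injOn hp
  have hq₁ := card_filter_le_one_of_injOn hq
  have hu_erase := endpointCount_erase_add (f := f) (g := g) hj₀ (f j₀)
  have hv_erase := endpointCount_erase_add (f := f) (g := g) hj₀ (g j₀)
  have hu_split := ho.card_add_card (E.erase j₀) (f j₀)
  have hv_split := ho.card_add_card (E.erase j₀) (g j₀)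
  have hdu := hdeg (f j₀)
  have hdv := hdeg (g j₀)
  suffices #{j ∈ E.erase j₀ | p j = f j₀} = 0 ∧ #{j ∈ E.erase j₀ | q j = g j₀} = 0 ∨
      #{j ∈ E.erase j₀ | p j = g j₀} = 0 ∧ #{j ∈ E.erase j₀ | q j = f j₀} = 0 by
    rcases this with ⟨hx, hy⟩ | ⟨hx, hy⟩
    · exact ⟨_, _, Or.inl ⟨rfl, rfl⟩, hx, hy⟩
    · exact ⟨_, _, Or.inr ⟨rfl, rfl⟩, hx, hy⟩
  by_cases hloop : f j₀ = g j₀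
  · simp only [hloop, if_true] at hu_erase hu_split hdu ⊢
    omega
  simp only [hloop, Ne.symm hloop, if_true, if_false] at hu_erase hv_erase
  rcases hchoice with h | h | h
  · omega
  · omega
  have hbal := ho.card_add_card_eq hp hq hloop fun k hku hkv => by
    have := endpointCount_erase_add (f := f) (g := g) hj₀ k
    rw [if_neg (Ne.symm hku), if_neg (Ne.symm hkv), add_zero, add_zero] at this
    exact this ▸ h k
  have := h (f j₀)
  have := h (g j₀)
  omega

theorem exists_orientation_injOn [Fintype α] [DecidableEq ι] [DecidableEq α] (E : Finset ι)
    (hdeg : ∀ k, endpointCount f g E k ≤ 2) :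
    ∃ p q, IsOrientation f g p q ∧ InjOn p E ∧ InjOn q E := by
  induction E using Finset.strongInduction with
  | H E ih =>
  rcases E.eq_empty_or_nonempty with rfl | ⟨j, hj⟩
  · exact ⟨f, g, fun j => Or.inl ⟨rfl, rfl⟩, by simp, by simp⟩
  obtain ⟨j₀, hj₀, hchoice⟩ : ∃ j₀ ∈ E, endpointCount f g E (f j₀) = 1 ∨
      endpointCount f g E (g j₀) = 1 ∨ ∀ k, endpointCount f g E k ≠ 1 := by
    by_cases h : ∃ k, endpointCount f g E k = 1
    · obtain ⟨k, hk⟩ := h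
      obtain ⟨j₀, hj₀, rfl | rfl⟩ :=
        exists_mem_of_endpointCount_ne_zero (hk ▸ one_ne_zero)
      exacts [⟨j₀, hj₀, Or.inl hk⟩, ⟨j₀, hj₀, Or.inr (Or.inl hk)⟩]
    · exact ⟨j, hj, Or.inr (Or.inr (not_exists.1 h))⟩
  obtain ⟨p, q, ho, hp, hq⟩ := ih (E.erase j₀) (erase_ssubset hj₀) fun k =>
    (Nat.le.intro (endpointCount_erase_add hj₀ k)).trans (hdeg k)
  obtain ⟨x, y, hxy, hx, hy⟩ := exists_free_endpoints hj₀ hdeg hchoice ho hp hq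
  rw [← insert_erase hj₀]
  exact exists_orientation_insert (notMem_erase j₀ E) ho hp hq hxy hx hy

end Orientation

theorem exists_eq_single_of_sum_eq_one {α : Type*} [Fintype α] [DecidableEq α] {v : α → ℤ}
    (hv : ∀ k, 0 ≤ v k) (hsum : ∑ k, v k = 1) : ∃ a, v = Pi.single a 1 := by
  obtain ⟨a, -, ha : 0 < v a⟩ :=
    exists_lt_of_sum_lt (s := univ) (f := 0) (g := v) (by simp [hsum])
  have hsplit := add_sum_erase univ v (mem_univ a)
  have hrest := sum_nonneg fun k (_ : k ∈ univ.erase a) => hv k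
  have hzero : ∀ k ∈ univ.erase a, v k = 0 :=
    (sum_eq_zero_iff_of_nonneg fun k _ => hv k).1 (by omega)
  refine ⟨a, funext fun k => ?_⟩
  rcases eq_or_ne k a with rfl | hk
  · simp only [Pi.single_eq_same]
    omega
  · simpa [hk] using hzero k (mem_erase.2 ⟨hk, mem_univ k⟩)

theorem exists_eq_single_add_single_of_sum_eq_two {α : Type*} [Fintype α] [DecidableEq α]
    {v : α → ℤ} (hv : ∀ k, 0 ≤ v k) (hsum : ∑ k, v k = 2) :
    ∃ a b, v = Pi.single a 1 + Pi.single b 1 := by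
  obtain ⟨a, -, ha : 0 < v a⟩ :=
    exists_lt_of_sum_lt (s := univ) (f := 0) (g := v) (by simp [hsum])
  obtain ⟨b, hb⟩ := exists_eq_single_of_sum_eq_one (v := v - Pi.single a 1)
    (fun k => by rcases eq_or_ne k a with rfl | hk <;> simp [*]; omega)
    (by simp [sum_sub_distrib, hsum])
  exact ⟨a, b, by rw [← hb, add_sub_cancel]⟩

theorem sum_single_one_apply {ι α : Type*} [DecidableEq α] (σ : ι → α) (E : Finset ι)
    (k : α) :
    ∑ j ∈ E, (Pi.single (σ j) (1 : ℤ) : α → ℤ) k = #{j ∈ E | σ j = k} := by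
  simp [Pi.single_apply, eq_comm]

theorem isProperVote_of_injective {r n : ℕ} {σ : Fin r → Fin n} (hσ : Injective σ) :
    IsProperVote r n (Matrix.of fun j => Pi.single (σ j) 1) := by
  refine ⟨fun j k => ?_, fun j => by simp, fun k => ?_⟩
  · rcases eq_or_ne k (σ j) with rfl | hk <;> simp [*]
  · have := card_filter_le_one_of_injOn hσ.injOn (E := univ) k
    simp only [Matrix.of_apply, sum_single_one_apply]
    omega

theorem exists_isProperVote_add_eq {r n : ℕ} (M : Matrix (Fin r) (Fin n) ℤ)
    (hM : ∀ j k, 0 ≤ M j k) (hrow : ∀ j, ∑ k, M j k = 2)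
    (hcol : ∀ k, ∑ j, M j k ≤ 2) :
    ∃ W₁ W₂, IsProperVote r n W₁ ∧ IsProperVote r n W₂ ∧ W₁ + W₂ = M := by
  choose f g hfg using fun j => exists_eq_single_add_single_of_sum_eq_two (hM j) (hrow j)
  have hdeg (k : Fin n) : endpointCount f g univ k ≤ 2 := by
    have := hcol k
    simp only [hfg, Pi.add_apply, sum_add_distrib, sum_single_one_apply] at this
    unfold endpointCount
    omega
  obtain ⟨p, q, ho, hp, hq⟩ := exists_orientation_injOn univ hdeg
  refine ⟨_, _, isProperVote_of_injective (injOn_univ.1 (by simpa using hp)),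
    isProperVote_of_injective (injOn_univ.1 (by simpa using hq)), ?_⟩
  ext j : 1
  rcases ho j with ⟨hpj, hqj⟩ | ⟨hpj, hqj⟩ <;> simp [hfg j, hpj, hqj, add_comm]

theorem improper_plus_proper_eq_sum_of_proper_general
    (r n : ℕ)
    (V₁ V₂ : Matrix (Fin r) (Fin n) ℤ)
    (h₁ : IsImproperVote r n V₁) (h₂ : IsProperVote r n V₂)
    (hpos : ∀ j k, 0 ≤ (V₁ + V₂) j k) :
    ∃ W₁ W₂ : Matrix (Fin r) (Fin n) ℤ,
      IsProperVote r n W₁ ∧ IsProperVote r n W₂ ∧ W₁ + W₂ = V₁ + V₂ := by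
  refine exists_isProperVote_add_eq _ hpos (fun j => ?_) (fun k => ?_)
  · simp only [Matrix.add_apply, sum_add_distrib, h₁.1 j, h₂.2.1 j]
    norm_num
  · simp only [Matrix.add_apply, sum_add_distrib]
    rcases h₁.2.1 k with h | h <;> rcases h₂.2.2 k with h' | h' <;> rw [h, h'] <;> norm_num

/-- For `1 ≤ r ≤ n`, if `V₁` is an improper vote and `V₂` is a proper
vote such that `V₁ + V₂` has all entries nonnegative, then `V₁ + V₂` is also the sum of
two proper votes. -/
theorem improper_plus_proper_eq_sum_of_proper
    (r n : ℕ) (hr : 1 ≤ r) (hrn : r ≤ n)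
    (V₁ V₂ : Matrix (Fin r) (Fin n) ℤ)
    (h₁ : IsImproperVote r n V₁) (h₂ : IsProperVote r n V₂)
    (hpos : ∀ j k, 0 ≤ (V₁ + V₂) j k) :
    ∃ W₁ W₂ : Matrix (Fin r) (Fin n) ℤ,
      IsProperVote r n W₁ ∧ IsProperVote r n W₂ ∧ W₁ + W₂ = V₁ + V₂ :=
  improper_plus_proper_eq_sum_of_proper_general r n V₁ V₂ h₁ h₂ hpos
end

section
/- Let 2 ≤ r ≤ n and let V₁, V₂ be proper votes corresponding to injections σ₁, σ₂ from {1,…,r} into {1,…,n}. Define the graph G on vertex set {1,…,r} with an edge {j,j'} (j ≠ j') if and only if the multisets {σ₁(j), σ₂(j)} and {σ₁(j'), σ₂(j')} share a candidate, and let L be the number of connected components of G other than isolated vertices j with σ₁(j) = σ₂(j). Then the number of unordered pairs (multisets) {W₁, W₂} of proper votes with W₁ + W₂ = V₁ + V₂ equals 2^{L−1} if L ≥ 1, and equals 1 if L = 0. -/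
/-- The proper vote (0–1 matrix) corresponding to an injection `σ`. -/
noncomputable def voteMat (n r : ℕ) (σ : Fin r ↪ Fin n) : Matrix (Fin r) (Fin n) ℤ :=
  fun j k => if σ j = k then 1 else 0

/-- The graph on positions `{1,…,r}` associated with two proper votes `σ₁, σ₂`: positions
`j ≠ j'` are adjacent iff the blocks (multisets) `{σ₁ j, σ₂ j}` and `{σ₁ j', σ₂ j'}`
share a candidate. -/
def blockGraph (n r : ℕ) (σ₁ σ₂ : Fin r ↪ Fin n) : SimpleGraph (Fin r) where
  Adj j j' := j ≠ j' ∧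
    (σ₁ j = σ₁ j' ∨ σ₁ j = σ₂ j' ∨ σ₂ j = σ₁ j' ∨ σ₂ j = σ₂ j')
  symm := by
    constructor
    intro j j' h
    refine ⟨h.1.symm, ?_⟩
    rcases h.2 with h | h | h | h
    · exact Or.inl h.symm
    · exact Or.inr (Or.inr (Or.inl h.symm))
    · exact Or.inr (Or.inl h.symm)
    · exact Or.inr (Or.inr (Or.inr h.symm))
  loopless := ⟨fun j h => h.1 rfl⟩

/-- A connected component of the block graph is brushed aside iff it is an isolated
vertex `j` whose block is of the form `{k, k}`, i.e. `σ₁ j = σ₂ j`. -/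
def IsTrivialComp (n r : ℕ) (σ₁ σ₂ : Fin r ↪ Fin n)
    (c : (blockGraph n r σ₁ σ₂).ConnectedComponent) : Prop :=
  ∃ j : Fin r, c = (blockGraph n r σ₁ σ₂).connectedComponentMk j ∧
    σ₁ j = σ₂ j ∧ ∀ j', ¬ (blockGraph n r σ₁ σ₂).Adj j j'

/-- `L`: the number of connected components of the block graph other than isolated
vertices `j` with `σ₁ j = σ₂ j`. -/
noncomputable def numComp (n r : ℕ) (σ₁ σ₂ : Fin r ↪ Fin n) : ℕ :=
  Nat.card {c : (blockGraph n r σ₁ σ₂).ConnectedComponent //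
    ¬ IsTrivialComp n r σ₁ σ₂ c}

/-!
Row `j` of `W₁ + W₂ = V₁ + V₂` says `{τ₁ j, τ₂ j} = {σ₁ j, σ₂ j}`, so a solution `(τ₁, τ₂)` is
obtained from `(σ₁, σ₂)` by exchanging the two entries of some of the blocks. If two blocks
share a candidate, exchanging exactly one of them would make `τ₁` or `τ₂` non-injective, so the
set of exchanged blocks is a union of components of the block graph; conversely every such union
gives a solution, and exchanging a block `{k, k}` changes nothing. Ordered solutions therefore
correspond to subsets of the `L` nontrivial components. Exchanging `τ₁` and `τ₂` complements the
subset, so for `L ≥ 1` each unordered solution has exactly one ordering in which a fixed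
nontrivial component is not exchanged, leaving `2 ^ (L - 1)` of them.
-/

open SimpleGraph

lemma card_bool_fun_apply_eq_false {α : Type*} [Finite α] (a : α) :
    Nat.card {f : α → Bool // f a = false} = 2 ^ (Nat.card α - 1) := by
  classical
  have := Fintype.ofFinite α
  rw [Nat.card_eq_fintype_card, Fintype.card_subtype, Nat.card_eq_fintype_card,
    ← Fintype.piFinset_univ,
    Fintype.card_filter_piFinset_const_eq_of_mem _ _ (Finset.mem_univ false)]
  rfl

lemma SimpleGraph.Walk.apply_eq_of_forall_adj {V β : Type*} {G : SimpleGraph V} {f : V → β}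
    (hf : ∀ a b, G.Adj a b → f a = f b) {u v : V} (p : G.Walk u v) : f u = f v := by
  induction p with
  | nil => rfl
  | cons hadj _ ih => exact (hf _ _ hadj).trans ih

section

variable {n r : ℕ}

lemma voteMat_eq_of (σ : Fin r ↪ Fin n) :
    voteMat n r σ = Matrix.of fun j => Pi.single (σ j) 1 := by
  ext j k
  simp [voteMat, Pi.single_apply, eq_comm]

lemma voteMat_add_voteMat_eq_iff {σ₁ σ₂ τ₁ τ₂ : Fin r ↪ Fin n} :
    voteMat n r τ₁ + voteMat n r τ₂ = voteMat n r σ₁ + voteMat n r σ₂ ↔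
      ∀ j, τ₁ j = σ₁ j ∧ τ₂ j = σ₂ j ∨ τ₁ j = σ₂ j ∧ τ₂ j = σ₁ j := by
  simp only [voteMat_eq_of, Matrix.of_add_of, EmbeddingLike.apply_eq_iff_eq]
  rw [funext_iff]
  simp only [Pi.add_apply, Pi.single_add_single_eq_single_add_single one_ne_zero one_ne_zero]
  norm_num

variable {σ₁ σ₂ : Fin r ↪ Fin n}

lemma blockGraph_adj_iff {j j' : Fin r} :
    (blockGraph n r σ₁ σ₂).Adj j j' ↔ j ≠ j' ∧ (σ₁ j = σ₂ j' ∨ σ₂ j = σ₁ j') := by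
  simp only [blockGraph, σ₁.injective.eq_iff, σ₂.injective.eq_iff]
  tauto

lemma blockGraph_not_adj_of_eq {j : Fin r} (h : σ₁ j = σ₂ j) (j' : Fin r) :
    ¬ (blockGraph n r σ₁ σ₂).Adj j j' := by
  rw [blockGraph_adj_iff, ← h, σ₁.injective.eq_iff, h, σ₂.injective.eq_iff]
  tauto

lemma isTrivialComp_connectedComponentMk_iff {j : Fin r} :
    IsTrivialComp n r σ₁ σ₂ ((blockGraph n r σ₁ σ₂).connectedComponentMk j) ↔ σ₁ j = σ₂ j := by
  refine ⟨fun ⟨j₀, hj₀, h, hiso⟩ => ?_, fun h => ⟨j, rfl, h, blockGraph_not_adj_of_eq h⟩⟩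
  obtain ⟨w⟩ := (ConnectedComponent.eq.mp hj₀).symm
  cases w with
  | nil => exact h
  | cons hadj _ => exact absurd hadj (hiso _)

variable (σ₁ σ₂) in
def swapEmb (F : (blockGraph n r σ₁ σ₂).ConnectedComponent → Bool) : Fin r ↪ Fin n where
  toFun j := if F ((blockGraph n r σ₁ σ₂).connectedComponentMk j) then σ₂ j else σ₁ j
  inj' a b h := by
    dsimp only at h
    by_contra hab
    have hadj : (blockGraph n r σ₁ σ₂).Adj a b := ⟨hab, by split_ifs at h <;> tauto⟩
    simp only [ConnectedComponent.sound hadj.reachable] at h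
    split_ifs at h
    exacts [hab (σ₂.injective h), hab (σ₁.injective h)]

lemma swapEmb_apply (F : (blockGraph n r σ₁ σ₂).ConnectedComponent → Bool) (j : Fin r) :
    swapEmb σ₁ σ₂ F j =
      if F ((blockGraph n r σ₁ σ₂).connectedComponentMk j) then σ₂ j else σ₁ j := rfl

lemma swapEmb_eq_swapEmb_iff {F G : (blockGraph n r σ₁ σ₂).ConnectedComponent → Bool} :
    swapEmb σ₁ σ₂ F = swapEmb σ₁ σ₂ G ↔ ∀ c, ¬ IsTrivialComp n r σ₁ σ₂ c → F c = G c := by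
  rw [DFunLike.ext_iff, ConnectedComponent.forall]
  refine forall_congr' fun j => ?_
  rw [isTrivialComp_connectedComponentMk_iff, swapEmb_apply, swapEmb_apply]
  cases F ((blockGraph n r σ₁ σ₂).connectedComponentMk j) <;>
    cases G ((blockGraph n r σ₁ σ₂).connectedComponentMk j) <;> simp [eq_comm]

lemma voteMat_swapEmb_add_voteMat_swapEmb_not
    (F : (blockGraph n r σ₁ σ₂).ConnectedComponent → Bool) :
    voteMat n r (swapEmb σ₁ σ₂ F) + voteMat n r (swapEmb σ₁ σ₂ fun c => !F c) =
      voteMat n r σ₁ + voteMat n r σ₂ := by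
  rw [voteMat_add_voteMat_eq_iff]
  intro j
  simp only [swapEmb_apply]
  cases F ((blockGraph n r σ₁ σ₂).connectedComponentMk j) <;> simp

lemma exists_swapEmb_eq_of_voteMat_add_eq {τ₁ τ₂ : Fin r ↪ Fin n}
    (h : voteMat n r τ₁ + voteMat n r τ₂ = voteMat n r σ₁ + voteMat n r σ₂) :
    ∃ F, swapEmb σ₁ σ₂ F = τ₁ ∧ (swapEmb σ₁ σ₂ fun c => !F c) = τ₂ := by
  rw [voteMat_add_voteMat_eq_iff] at h
  obtain ⟨φ, hτ⟩ : ∃ φ : Fin r → Bool, ∀ j,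
      τ₁ j = (if φ j then σ₂ j else σ₁ j) ∧ τ₂ j = (if φ j then σ₁ j else σ₂ j) := by
    refine ⟨fun j => decide (τ₁ j ≠ σ₁ j), fun j => ?_⟩
    by_cases hj : τ₁ j = σ₁ j <;> rcases h j with ⟨h₁, h₂⟩ | ⟨h₁, h₂⟩ <;> simp_all
  have hadj : ∀ a b, (blockGraph n r σ₁ σ₂).Adj a b → φ a = φ b := by
    intro a b hab
    obtain ⟨hne, hab⟩ := blockGraph_adj_iff.mp hab
    have h₁ : τ₁ a ≠ τ₁ b := τ₁.injective.ne hne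
    have h₂ : τ₂ a ≠ τ₂ b := τ₂.injective.ne hne
    rw [(hτ a).1, (hτ b).1] at h₁
    rw [(hτ a).2, (hτ b).2] at h₂
    revert h₁ h₂
    cases φ a <;> cases φ b <;> simp only [Bool.false_eq_true, ↓reduceIte] <;> tauto
  refine ⟨ConnectedComponent.lift φ fun _ _ p _ => p.apply_eq_of_forall_adj hadj, ?_, ?_⟩ <;>
    refine DFunLike.ext _ _ fun j => ?_ <;> rw [swapEmb_apply, ConnectedComponent.lift_mk]
  · exact (hτ j).1.symm
  · rw [(hτ j).2]
    cases φ j <;> rfl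

variable (σ₁ σ₂) in
abbrev NontrivialComp : Type :=
  {c : (blockGraph n r σ₁ σ₂).ConnectedComponent // ¬ IsTrivialComp n r σ₁ σ₂ c}

variable (σ₁ σ₂) in
abbrev VoteFiber : Type :=
  {s : Sym2 (Fin r ↪ Fin n) // ∃ τ₁ τ₂ : Fin r ↪ Fin n, s = s(τ₁, τ₂) ∧
    voteMat n r τ₁ + voteMat n r τ₂ = voteMat n r σ₁ + voteMat n r σ₂}

-- Its values on trivial components are irrelevant, as `swapEmb` ignores them.
noncomputable def extendComp (f : NontrivialComp σ₁ σ₂ → Bool) :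
    (blockGraph n r σ₁ σ₂).ConnectedComponent → Bool :=
  Function.extend Subtype.val f fun _ => false

lemma extendComp_apply (f : NontrivialComp σ₁ σ₂ → Bool) (c : NontrivialComp σ₁ σ₂) :
    extendComp f c.1 = f c :=
  Subtype.val_injective.extend_apply _ _ c

lemma swapEmb_extendComp_eq_iff {f : NontrivialComp σ₁ σ₂ → Bool}
    {F : (blockGraph n r σ₁ σ₂).ConnectedComponent → Bool} :
    swapEmb σ₁ σ₂ (extendComp f) = swapEmb σ₁ σ₂ F ↔ ∀ c, f c = F c.1 := by
  simp only [swapEmb_eq_swapEmb_iff, Subtype.forall, ← extendComp_apply f]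

lemma swapEmb_extendComp_not (f : NontrivialComp σ₁ σ₂ → Bool) :
    swapEmb σ₁ σ₂ (extendComp fun c => !f c) = swapEmb σ₁ σ₂ fun c => !extendComp f c :=
  swapEmb_extendComp_eq_iff.mpr fun c => by rw [extendComp_apply]

noncomputable def fiberPoint (f : NontrivialComp σ₁ σ₂ → Bool) : VoteFiber σ₁ σ₂ :=
  ⟨s(swapEmb σ₁ σ₂ (extendComp f), swapEmb σ₁ σ₂ (extendComp fun c => !f c)), _, _, rfl, by
    rw [swapEmb_extendComp_not]
    exact voteMat_swapEmb_add_voteMat_swapEmb_not _⟩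

lemma fiberPoint_eq_fiberPoint_iff {f g : NontrivialComp σ₁ σ₂ → Bool} :
    fiberPoint f = fiberPoint g ↔ f = g ∨ f = fun c => !g c := by
  simp only [fiberPoint, Subtype.mk.injEq, Sym2.eq_iff, swapEmb_extendComp_eq_iff,
    extendComp_apply, funext_iff, Bool.not_eq_eq_eq_not, Bool.not_not, and_self]

lemma fiberPoint_surjective : Function.Surjective (fiberPoint (σ₁ := σ₁) (σ₂ := σ₂)) := by
  rintro ⟨_, τ₁, τ₂, rfl, h⟩
  obtain ⟨F, rfl, rfl⟩ := exists_swapEmb_eq_of_voteMat_add_eq h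
  refine ⟨fun c => F c.1, Subtype.ext ?_⟩
  dsimp only [fiberPoint]
  rw [(swapEmb_extendComp_eq_iff (F := F)).mpr fun _ => rfl,
    (swapEmb_extendComp_eq_iff (F := fun c => !F c)).mpr fun _ => rfl]

lemma bijective_fiberPoint_restrict (c₀ : NontrivialComp σ₁ σ₂) :
    Function.Bijective
      fun f : {f : NontrivialComp σ₁ σ₂ → Bool // f c₀ = false} => fiberPoint f.1 := by
  refine ⟨fun f g hfg => Subtype.ext ?_, fun s => ?_⟩
  · rcases fiberPoint_eq_fiberPoint_iff.mp hfg with h | h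
    · exact h
    · simpa [f.2, g.2] using congrFun h c₀
  · obtain ⟨f, rfl⟩ := fiberPoint_surjective s
    cases hf : f c₀
    · exact ⟨⟨f, hf⟩, rfl⟩
    · exact ⟨⟨fun c => !f c, by simp [hf]⟩, fiberPoint_eq_fiberPoint_iff.mpr (Or.inr rfl)⟩

end

theorem card_fiber_of_two_votes_general
    (n r : ℕ) (σ₁ σ₂ : Fin r ↪ Fin n) :
    Nat.card {s : Sym2 (Fin r ↪ Fin n) //
        ∃ τ₁ τ₂ : Fin r ↪ Fin n, s = s(τ₁, τ₂) ∧
          voteMat n r τ₁ + voteMat n r τ₂ = voteMat n r σ₁ + voteMat n r σ₂} =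
      if numComp n r σ₁ σ₂ = 0 then 1 else 2 ^ (numComp n r σ₁ σ₂ - 1) := by
  rcases isEmpty_or_nonempty (NontrivialComp σ₁ σ₂) with hL | hL
  · have hL0 : numComp n r σ₁ σ₂ = 0 := Nat.card_of_isEmpty
    rw [if_pos hL0, Nat.card_eq_one_iff_unique]
    exact ⟨fiberPoint_surjective.subsingleton, ⟨fiberPoint isEmptyElim⟩⟩
  · obtain ⟨c₀⟩ := hL
    have hL0 : numComp n r σ₁ σ₂ ≠ 0 := Nat.card_ne_zero.mpr ⟨⟨c₀⟩, inferInstance⟩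
    rw [if_neg hL0, numComp, ← card_bool_fun_apply_eq_false c₀]
    exact (Nat.card_eq_of_bijective _ (bijective_fiberPoint_restrict c₀)).symm

/-- For `2 ≤ r ≤ n` and proper votes given by injections `σ₁, σ₂`,
the number of unordered pairs `{W₁, W₂}` of proper votes with `W₁ + W₂ = V₁ + V₂`
equals `2^(L-1)` if `L ≥ 1` and `1` if `L = 0`, where `L` is the number of nontrivial
connected components of the block graph. -/
theorem card_fiber_of_two_votes
    (n r : ℕ) (hr : 2 ≤ r) (hrn : r ≤ n) (σ₁ σ₂ : Fin r ↪ Fin n) :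
    Nat.card {s : Sym2 (Fin r ↪ Fin n) //
        ∃ τ₁ τ₂ : Fin r ↪ Fin n, s = s(τ₁, τ₂) ∧
          voteMat n r τ₁ + voteMat n r τ₂ = voteMat n r σ₁ + voteMat n r σ₂} =
      if numComp n r σ₁ σ₂ = 0 then 1 else 2 ^ (numComp n r σ₁ σ₂ - 1) :=
  card_fiber_of_two_votes_general n r σ₁ σ₂
end

section
/- For every integer n ≥ 2, every minimal Markov basis for A_{n,2} contains exactly 6·C(n,4) moves of degree two, where C(n,4) denotes the binomial coefficient n choose 4. -/
/-- The sufficient-statistic map (configuration matrix `A_{n,r}` applied to a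
nonnegative integer vector indexed by `S_{n,r}`, the injections from `Fin r` to `Fin n`):
the `(j,k)` coordinate counts, with multiplicity `x σ`, the votes `σ` with `σ j = k`. -/
noncomputable def suffN (n r : ℕ) (x : (Fin r ↪ Fin n) → ℕ) : Fin r × Fin n → ℕ :=
  fun p => ∑ σ : Fin r ↪ Fin n, if σ p.1 = p.2 then x σ else 0

/-- The configuration matrix `A_{n,r}` applied to an integer vector. -/
noncomputable def suffZ (n r : ℕ) (z : (Fin r ↪ Fin n) → ℤ) : Fin r × Fin n → ℤ :=
  fun p => ∑ σ : Fin r ↪ Fin n, if σ p.1 = p.2 then z σ else 0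

/-- The degree of a move `z`: `Σ_σ max(z σ, 0)`. -/
noncomputable def moveDeg (n r : ℕ) (z : (Fin r ↪ Fin n) → ℤ) : ℕ :=
  ∑ σ : Fin r ↪ Fin n, (z σ).toNat

/-- `B` is a Markov basis for `A_{n,r}`: a finite set of moves (elements of the integer
kernel of `A_{n,r}`) such that any two points of a common fiber are connected by a path
staying in the fiber whose steps are elements of `B ∪ (-B)`. -/
def IsMarkovBasis (n r : ℕ) (B : Finset ((Fin r ↪ Fin n) → ℤ)) : Prop :=
  (∀ z ∈ B, suffZ n r z = 0) ∧
  ∀ x y : (Fin r ↪ Fin n) → ℕ, suffN n r x = suffN n r y →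
    ∃ (m : ℕ) (w : ℕ → (Fin r ↪ Fin n) → ℕ),
      w 0 = x ∧ w m = y ∧
      (∀ i ≤ m, suffN n r (w i) = suffN n r x) ∧
      (∀ i < m, (fun σ => (w (i+1) σ : ℤ) - (w i σ : ℤ)) ∈ B ∨
                (fun σ => (w i σ : ℤ) - (w (i+1) σ : ℤ)) ∈ B)


/-!
A move of degree two in `ker A_{n,2}` has the form `e_{ab} + e_{cd} - e_{ad} - e_{cb}` for distinct
`a, b, c, d`: its positive and negative parts are two-vote points with the same row margins, and
such points either coincide or are obtained from each other by exchanging the second entries. So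
the degree-two moves are indexed by the `24 * C(n, 4)` injections `q : Fin 4 ↪ Fin n`, each move
by exactly two of them (`(a, b, c, d)` and `(c, d, a, b)`), while `(a, d, c, b)` gives the negated
move. The fiber of `e_{ab} + e_{cd}` is `{e_{ab} + e_{cd}, e_{ad} + e_{cb}}`, so a Markov basis
contains each degree-two move or its negative, and a minimal one never both. Hence a minimal Markov
basis contains exactly half of the `12 * C(n, 4)` moves of degree two.
-/

open Finset Function.Embedding

section PairVec
variable {α : Type*} [DecidableEq α]

def pairVec (a b : α) : α → ℕ := Pi.single a 1 + Pi.single b 1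

lemma pairVec_comm (a b : α) : pairVec a b = pairVec b a := add_comm _ _

lemma pairVec_eq_pairVec_iff {a b c d : α} : pairVec a b = pairVec c d ↔ s(a, b) = s(c, d) := by
  rw [pairVec, pairVec, Pi.single_add_single_eq_single_add_single one_ne_zero one_ne_zero,
    Sym2.eq_iff]
  simp

lemma pairVec_ne_zero_iff {a b x : α} : pairVec a b x ≠ 0 ↔ x = a ∨ x = b := by
  simp only [pairVec, Pi.add_apply, Pi.single_apply]
  split_ifs <;> simp_all

variable [Fintype α]

lemma sum_pairVec (a b : α) : ∑ x, pairVec a b x = 2 := by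
  simp [pairVec, sum_add_distrib]

lemma exists_eq_single_add_of_sum_eq_succ {f : α → ℕ} {k : ℕ} (h : ∑ x, f x = k + 1) :
    ∃ (a : α) (g : α → ℕ), f = Pi.single a 1 + g ∧ ∑ x, g x = k := by
  obtain ⟨a, -, ha⟩ := exists_ne_zero_of_sum_ne_zero (h.trans_ne k.succ_ne_zero)
  have hf : f = Pi.single a 1 + (f - Pi.single a 1) := by
    ext x
    rcases eq_or_ne x a with rfl | hx <;> simp [*]
    omega
  refine ⟨a, f - Pi.single a 1, hf, ?_⟩
  rw [hf] at h
  simp only [Pi.add_apply, sum_add_distrib, sum_pi_single', mem_univ, if_true] at h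
  omega

lemma exists_eq_pairVec_of_sum_eq_two {f : α → ℕ} (h : ∑ x, f x = 2) :
    ∃ a b, f = pairVec a b := by
  obtain ⟨a, g, rfl, hg⟩ := exists_eq_single_add_of_sum_eq_succ h
  obtain ⟨b, g', rfl, hg'⟩ := exists_eq_single_add_of_sum_eq_succ hg
  obtain rfl : g' = 0 := funext fun x => sum_eq_zero_iff.mp hg' x (mem_univ x)
  exact ⟨a, b, by simp [pairVec]⟩

end PairVec

lemma Finset.card_eq_two_mul_of_mem_iff_or_neg_mem {G : Type*} [AddGroup G] [DecidableEq G]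
    {D F : Finset G} (hD : ∀ z, z ∈ D ↔ z ∈ F ∨ -z ∈ F) (hF : ∀ z ∈ F, -z ∉ F) :
    #D = 2 * #F := by
  have hunion : D = F ∪ F.image Neg.neg := by
    ext z
    simp [hD, neg_eq_iff_eq_neg]
  have hdisj : Disjoint F (F.image Neg.neg) := by
    simp only [disjoint_left, mem_image, not_exists, not_and]
    rintro z hz u hu rfl
    exact hF u hu hz
  rw [hunion, card_union_of_disjoint hdisj, card_image_of_injective _ neg_injective, two_mul]

lemma Fintype.card_eq_two_mul_card_image {α β : Type*} [Fintype α] [DecidableEq α]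
    [DecidableEq β] (f : α → β) (ι : α → α) (hι : ∀ x, ι x ≠ x)
    (hf : ∀ x y, f y = f x ↔ y = x ∨ y = ι x) :
    Fintype.card α = 2 * #(univ.image f) := by
  rw [← card_univ, card_eq_sum_card_image f, sum_const_nat, mul_comm]
  simp only [forall_mem_image, mem_univ, true_imp_iff]
  intro x
  rw [show univ.filter (fun y => f y = f x) = {x, ι x} by ext y; simp [hf]]
  exact card_pair (hι x).symm

lemma exists_step_of_ne {β : Type*} {w : ℕ → β} {a b : β} {m : ℕ} (hab : a ≠ b) (h0 : w 0 = a)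
    (hm : w m = b) (hw : ∀ i ≤ m, w i = a ∨ w i = b) : ∃ i < m, w i = a ∧ w (i + 1) = b := by
  induction m with
  | zero => exact absurd (h0.symm.trans hm) hab
  | succ m ih =>
    rcases hw m m.le_succ with h | h
    · exact ⟨m, m.lt_succ_self, h, hm⟩
    · obtain ⟨i, hi, hstep⟩ := ih h fun i hi => hw i (hi.trans m.le_succ)
      exact ⟨i, hi.trans m.lt_succ_self, hstep⟩

section Margins
variable {n r : ℕ}

lemma suffN_add (x y : (Fin r ↪ Fin n) → ℕ) :
    suffN n r (x + y) = suffN n r x + suffN n r y := by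
  ext p
  simp only [suffN, Pi.add_apply, ← sum_add_distrib]
  exact sum_congr rfl fun σ _ => by split_ifs <;> simp

lemma suffN_single (σ : Fin r ↪ Fin n) (j : Fin r) (k : Fin n) :
    suffN n r (Pi.single σ 1) (j, k) = Pi.single (M := fun _ => ℕ) (σ j) 1 k := by
  rw [suffN, Fintype.sum_eq_single σ fun τ hτ => by simp [hτ]]
  simp [Pi.single_apply, eq_comm]

lemma suffN_pairVec (σ ρ : Fin r ↪ Fin n) (j : Fin r) (k : Fin n) :
    suffN n r (pairVec σ ρ) (j, k) = pairVec (σ j) (ρ j) k := by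
  simp [pairVec, suffN_add, suffN_single]

lemma suffN_pairVec_eq_iff {σ ρ τ τ' : Fin r ↪ Fin n} :
    suffN n r (pairVec σ ρ) = suffN n r (pairVec τ τ') ↔ ∀ j, s(σ j, ρ j) = s(τ j, τ' j) := by
  simp_rw [← pairVec_eq_pairVec_iff, funext_iff, Prod.forall, suffN_pairVec]

lemma sum_suffN_row (x : (Fin r ↪ Fin n) → ℕ) (j : Fin r) :
    ∑ k, suffN n r x (j, k) = ∑ σ, x σ := by
  simp only [suffN]
  rw [sum_comm]
  simp

lemma suffZ_natCast_sub_eq_zero_iff {x y : (Fin r ↪ Fin n) → ℕ} :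
    suffZ n r (fun σ => (x σ : ℤ) - y σ) = 0 ↔ suffN n r x = suffN n r y := by
  have hsuffZ : suffZ n r (fun σ => (x σ : ℤ) - y σ) =
      fun p => (suffN n r x p : ℤ) - suffN n r y p := by
    ext p
    simp only [suffZ, suffN, Nat.cast_sum, Nat.cast_ite, Nat.cast_zero, ← sum_sub_distrib]
    exact sum_congr rfl fun σ _ => by split_ifs <;> simp
  simp [hsuffZ, funext_iff, sub_eq_zero]

end Margins

namespace IsMarkovBasis
variable {n r : ℕ} {B : Finset ((Fin r ↪ Fin n) → ℤ)}

lemma sub_mem_or_sub_mem_of_fiber {x y : (Fin r ↪ Fin n) → ℕ} (hB : IsMarkovBasis n r B)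
    (hxy : x ≠ y) (hy : suffN n r y = suffN n r x)
    (hfiber : ∀ w, suffN n r w = suffN n r x → w = x ∨ w = y) :
    (fun σ => (y σ : ℤ) - x σ) ∈ B ∨ (fun σ => (x σ : ℤ) - y σ) ∈ B := by
  obtain ⟨m, w, h0, hm, hw, hsteps⟩ := hB.2 x y hy.symm
  obtain ⟨i, hi, hwi, hwi'⟩ :=
    exists_step_of_ne hxy h0 hm fun i hi => hfiber _ ((hw i hi).trans (h0 ▸ rfl))
  simpa only [hwi, hwi'] using hsteps i hi

lemma of_forall_mem_or_neg_mem {B' : Finset ((Fin r ↪ Fin n) → ℤ)} (hB : IsMarkovBasis n r B)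
    (hker : ∀ z ∈ B', suffZ n r z = 0) (hBB' : ∀ z ∈ B, z ∈ B' ∨ -z ∈ B') :
    IsMarkovBasis n r B' := by
  refine ⟨hker, fun x y hxy => ?_⟩
  obtain ⟨m, w, h0, hm, hw, hsteps⟩ := hB.2 x y hxy
  refine ⟨m, w, h0, hm, hw, fun i hi => ?_⟩
  have hneg : (fun σ => (w i σ : ℤ) - w (i + 1) σ) = -fun σ => (w (i + 1) σ : ℤ) - w i σ := by
    ext σ; simp
  rw [hneg]
  rcases hsteps i hi with h | h
  · exact hBB' _ h
  · rw [hneg] at h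
    simpa only [neg_neg, or_comm] using hBB' _ h

lemma erase_neg (hB : IsMarkovBasis n r B) {z : (Fin r ↪ Fin n) → ℤ} (hz : z ∈ B)
    (hne : -z ≠ z) : IsMarkovBasis n r (B.erase (-z)) := by
  refine hB.of_forall_mem_or_neg_mem (fun u hu => hB.1 u (mem_of_mem_erase hu)) fun u hu => ?_
  by_cases hu' : u = -z
  · subst hu'
    exact Or.inr (mem_erase.2 ⟨by rwa [neg_neg, ne_comm], by rwa [neg_neg]⟩)
  · exact Or.inl (mem_erase.2 ⟨hu', hu⟩)

lemma neg_notMem_of_minimal (hB : IsMarkovBasis n r B)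
    (hmin : ∀ B' ⊂ B, ¬ IsMarkovBasis n r B') {z : (Fin r ↪ Fin n) → ℤ} (hz : z ∈ B)
    (hne : -z ≠ z) : -z ∉ B :=
  fun hz' => hmin _ (erase_ssubset hz') (hB.erase_neg hz hne)

end IsMarkovBasis

section TwoEmbeddings
variable {α : Type*}

lemma embedding_fin_two_ext {σ τ : Fin 2 ↪ α} (h0 : σ 0 = τ 0) (h1 : σ 1 = τ 1) : σ = τ :=
  DFunLike.ext _ _ (Fin.forall_fin_two.2 ⟨h0, h1⟩)

lemma eq_or_eq_cross_of_rows {σ ρ τ τ' : Fin 2 ↪ α} (h0 : s(σ 0, ρ 0) = s(τ 0, τ' 0))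
    (h1 : s(σ 1, ρ 1) = s(τ 1, τ' 1)) :
    s(σ, ρ) = s(τ, τ') ∨
      ∃ (h : σ 0 ≠ ρ 1) (h' : ρ 0 ≠ σ 1), s(embFinTwo h, embFinTwo h') = s(τ, τ') := by
  rw [Sym2.eq_iff] at h0 h1
  rcases h0 with ⟨a0, b0⟩ | ⟨a0, b0⟩ <;> rcases h1 with ⟨a1, b1⟩ | ⟨a1, b1⟩
  · rw [embedding_fin_two_ext a0 a1, embedding_fin_two_ext b0 b1]
    exact Or.inl rfl
  · refine Or.inr ⟨by rw [a0, b1]; exact τ.injective.ne zero_ne_one,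
      by rw [b0, a1]; exact τ'.injective.ne zero_ne_one, ?_⟩
    exact congrArg₂ (fun a b => s(a, b)) (embedding_fin_two_ext a0 b1)
      (embedding_fin_two_ext b0 a1)
  · refine Or.inr ⟨by rw [a0, b1]; exact τ'.injective.ne zero_ne_one,
      by rw [b0, a1]; exact τ.injective.ne zero_ne_one, ?_⟩
    rw [Sym2.eq_swap]
    exact congrArg₂ (fun a b => s(a, b)) (embedding_fin_two_ext b0 a1)
      (embedding_fin_two_ext a0 b1)
  · rw [embedding_fin_two_ext a0 a1, embedding_fin_two_ext b0 b1]
    exact Or.inl Sym2.eq_swap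

end TwoEmbeddings

section Quadruples
variable {α : Type*}

/-- For `q = (a, b, c, d)`, `cell q i j` is the vote `0 ↦ q i, 1 ↦ q j`. -/
def cell (q : Fin 4 ↪ α) (i j : Fin 4) (h : i ≠ j := by decide) : Fin 2 ↪ α :=
  embFinTwo (q.injective.ne h)

@[simp] lemma cell_apply_zero (q : Fin 4 ↪ α) (i j : Fin 4) (h : i ≠ j) : cell q i j h 0 = q i :=
  rfl

@[simp] lemma cell_apply_one (q : Fin 4 ↪ α) (i j : Fin 4) (h : i ≠ j) : cell q i j h 1 = q j :=
  rfl

lemma quad_ext {q q' : Fin 4 ↪ α} (h01 : cell q 0 1 = cell q' 0 1)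
    (h23 : cell q 2 3 = cell q' 2 3) : q = q' := by
  ext i
  fin_cases i
  exacts [DFunLike.congr_fun h01 0, DFunLike.congr_fun h01 1, DFunLike.congr_fun h23 0,
    DFunLike.congr_fun h23 1]

def swapCols (q : Fin 4 ↪ α) : Fin 4 ↪ α := (Equiv.swap 1 3).toEmbedding.trans q

def swapCells (q : Fin 4 ↪ α) : Fin 4 ↪ α :=
  (Equiv.swap (0 : Fin 4) 2 * Equiv.swap 1 3).toEmbedding.trans q

lemma swapCols_swapCols (q : Fin 4 ↪ α) : swapCols (swapCols q) = q := quad_ext rfl rfl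

lemma swapCells_ne_self (q : Fin 4 ↪ α) : swapCells q ≠ q :=
  fun h => q.injective.ne (by decide : (2 : Fin 4) ≠ 0) (DFunLike.congr_fun h 0)

lemma exists_cell_eq_of_cross {σ ρ : Fin 2 ↪ α} (h0 : σ 0 ≠ ρ 0) (h1 : σ 1 ≠ ρ 1)
    (h : σ 0 ≠ ρ 1) (h' : ρ 0 ≠ σ 1) :
    ∃ q : Fin 4 ↪ α, cell q 0 1 = σ ∧ cell q 2 3 = ρ ∧
      cell q 0 3 = embFinTwo h ∧ cell q 2 1 = embFinTwo h' := by
  have hrange : Disjoint (Set.range σ) (Set.range ρ) := by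
    simp only [Set.disjoint_range_iff, Fin.forall_fin_two]
    exact ⟨⟨h0, h⟩, ⟨h'.symm, h1⟩⟩
  exact ⟨Fin.Embedding.append hrange, embedding_fin_two_ext rfl rfl,
    embedding_fin_two_ext rfl rfl, rfl, rfl⟩

variable [DecidableEq α]

def quadPoint (q : Fin 4 ↪ α) : (Fin 2 ↪ α) → ℕ := pairVec (cell q 0 1) (cell q 2 3)

/-- For `q = (a, b, c, d)` this is the move `e_{ab} + e_{cd} - e_{ad} - e_{cb}`. -/
def quadMove (q : Fin 4 ↪ α) : (Fin 2 ↪ α) → ℤ :=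
  fun σ => (quadPoint q σ : ℤ) - quadPoint (swapCols q) σ

lemma quadPoint_swapCols (q : Fin 4 ↪ α) :
    quadPoint (swapCols q) = pairVec (cell q 0 3) (cell q 2 1) := rfl

lemma quadPoint_swapCells (q : Fin 4 ↪ α) : quadPoint (swapCells q) = quadPoint q :=
  pairVec_comm _ _

lemma quadPoint_swapCols_swapCells (q : Fin 4 ↪ α) :
    quadPoint (swapCols (swapCells q)) = quadPoint (swapCols q) :=
  pairVec_comm _ _

lemma quadMove_swapCols (q : Fin 4 ↪ α) : quadMove (swapCols q) = -quadMove q := by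
  ext σ
  simp only [quadMove, swapCols_swapCols, Pi.neg_apply, neg_sub]

lemma quadMove_swapCells (q : Fin 4 ↪ α) : quadMove (swapCells q) = quadMove q := by
  unfold quadMove
  rw [quadPoint_swapCells, quadPoint_swapCols_swapCells]

lemma quadPoint_eq_zero_or (q : Fin 4 ↪ α) (σ : Fin 2 ↪ α) :
    quadPoint q σ = 0 ∨ quadPoint (swapCols q) σ = 0 := by
  by_contra! h
  rw [quadPoint, quadPoint_swapCols, pairVec_ne_zero_iff, pairVec_ne_zero_iff] at h
  obtain ⟨rfl | rfl, h | h⟩ := h <;> simp [DFunLike.ext_iff, Fin.forall_fin_two] at h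

lemma toNat_quadMove (q : Fin 4 ↪ α) (σ : Fin 2 ↪ α) : (quadMove q σ).toNat = quadPoint q σ := by
  rcases quadPoint_eq_zero_or q σ with h | h <;> simp [quadMove, h]

lemma quadMove_eq_quadMove_iff {q q' : Fin 4 ↪ α} :
    quadMove q' = quadMove q ↔ q' = q ∨ q' = swapCells q := by
  refine ⟨fun h => ?_, ?_⟩
  · have hpoint : quadPoint q' = quadPoint q :=
      funext fun σ => by rw [← toNat_quadMove, ← toNat_quadMove, h]
    rw [quadPoint, quadPoint, pairVec_eq_pairVec_iff, Sym2.eq_iff] at hpoint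
    rcases hpoint with ⟨h01, h23⟩ | ⟨h01, h23⟩
    exacts [Or.inl (quad_ext h01 h23), Or.inr (quad_ext h01 h23)]
  · rintro (rfl | rfl)
    exacts [rfl, quadMove_swapCells q]

end Quadruples

section DegreeTwoMoves
variable {n : ℕ}

lemma moveDeg_quadMove (q : Fin 4 ↪ Fin n) : moveDeg n 2 (quadMove q) = 2 := by
  simp only [moveDeg, toNat_quadMove, quadPoint, sum_pairVec]

lemma suffN_quadPoint_swapCols (q : Fin 4 ↪ Fin n) :
    suffN n 2 (quadPoint (swapCols q)) = suffN n 2 (quadPoint q) :=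
  suffN_pairVec_eq_iff.2 (Fin.forall_fin_two.2 ⟨rfl, Sym2.eq_swap⟩)

lemma eq_quadPoint_or_eq_quadPoint_swapCols {q : Fin 4 ↪ Fin n} {w : (Fin 2 ↪ Fin n) → ℕ}
    (hw : suffN n 2 w = suffN n 2 (quadPoint q)) :
    w = quadPoint q ∨ w = quadPoint (swapCols q) := by
  have htotal : ∑ σ, w σ = 2 := by
    rw [← sum_suffN_row w 0, hw, sum_suffN_row, quadPoint, sum_pairVec]
  obtain ⟨τ, τ', rfl⟩ := exists_eq_pairVec_of_sum_eq_two htotal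
  rw [eq_comm, quadPoint, suffN_pairVec_eq_iff] at hw
  rcases eq_or_eq_cross_of_rows (hw 0) (hw 1) with hs | ⟨_, _, hs⟩
  exacts [Or.inl (pairVec_eq_pairVec_iff.2 hs.symm), Or.inr (pairVec_eq_pairVec_iff.2 hs.symm)]

theorem exists_quadMove_eq {z : (Fin 2 ↪ Fin n) → ℤ} (hker : suffZ n 2 z = 0)
    (hdeg : moveDeg n 2 z = 2) : ∃ q : Fin 4 ↪ Fin n, quadMove q = z := by
  set p : (Fin 2 ↪ Fin n) → ℕ := fun σ => (z σ).toNat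
  set m : (Fin 2 ↪ Fin n) → ℕ := fun σ => (-z σ).toNat
  have hz : z = fun σ => (p σ : ℤ) - m σ := funext fun σ => (Int.toNat_sub_toNat_neg (z σ)).symm
  have hdisj : ∀ σ, p σ ≠ 0 → m σ ≠ 0 → False := fun σ => by simp only [p, m]; omega
  have hpm : suffN n 2 p = suffN n 2 m := suffZ_natCast_sub_eq_zero_iff.1 (hz ▸ hker)
  obtain ⟨σ, ρ, hp⟩ := exists_eq_pairVec_of_sum_eq_two (f := p) hdeg
  obtain ⟨τ, τ', hm⟩ := exists_eq_pairVec_of_sum_eq_two (f := m) <| by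
    rw [← sum_suffN_row m 0, ← hpm, sum_suffN_row]; exact hdeg
  rw [hp, hm, suffN_pairVec_eq_iff] at hpm
  rcases eq_or_eq_cross_of_rows (hpm 0) (hpm 1) with hs | ⟨h, h', hs⟩
  · refine (hdisj σ ?_ ?_).elim
    · rw [hp, pairVec_ne_zero_iff]; exact Or.inl rfl
    · rw [hm, ← pairVec_eq_pairVec_iff.2 hs, pairVec_ne_zero_iff]; exact Or.inl rfl
  have hcross : ∀ x, (x = σ ∨ x = ρ) → (x = embFinTwo h ∨ x = embFinTwo h') → False :=
    fun x hpx hmx => hdisj x (by rwa [hp, pairVec_ne_zero_iff])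
      (by rwa [hm, ← pairVec_eq_pairVec_iff.2 hs, pairVec_ne_zero_iff])
  obtain ⟨q, h01, h23, h03, h21⟩ := exists_cell_eq_of_cross (σ := σ) (ρ := ρ)
    (fun e => hcross σ (Or.inl rfl) (Or.inr (embedding_fin_two_ext e rfl)))
    (fun e => hcross σ (Or.inl rfl) (Or.inl (embedding_fin_two_ext rfl e))) h h'
  have hpoint : quadPoint q = p := by rw [hp, quadPoint, h01, h23]
  have hpoint' : quadPoint (swapCols q) = m := by
    rw [hm, ← pairVec_eq_pairVec_iff.2 hs, quadPoint_swapCols, h03, h21]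
  refine ⟨q, ?_⟩
  rw [hz]
  unfold quadMove
  rw [hpoint, hpoint']

end DegreeTwoMoves

section MinimalMarkovBasis
variable {n : ℕ} {B : Finset ((Fin 2 ↪ Fin n) → ℤ)}

lemma IsMarkovBasis.quadMove_mem_or_neg_mem (hB : IsMarkovBasis n 2 B) (q : Fin 4 ↪ Fin n) :
    quadMove q ∈ B ∨ -quadMove q ∈ B := by
  have hne : quadPoint q ≠ quadPoint (swapCols q) := fun h => by
    simpa [moveDeg, quadMove, h] using moveDeg_quadMove q
  rcases hB.sub_mem_or_sub_mem_of_fiber hne (suffN_quadPoint_swapCols q)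
    fun w => eq_quadPoint_or_eq_quadPoint_swapCols with h | h
  · right
    convert h using 1
    ext σ; simp [quadMove]
  · exact Or.inl h

lemma IsMarkovBasis.mem_image_quadMove_iff (hB : IsMarkovBasis n 2 B)
    (z : (Fin 2 ↪ Fin n) → ℤ) :
    z ∈ univ.image quadMove ↔
      z ∈ B.filter (fun z => moveDeg n 2 z = 2) ∨ -z ∈ B.filter (fun z => moveDeg n 2 z = 2) := by
  simp only [mem_image, mem_univ, true_and, mem_filter]
  constructor
  · rintro ⟨q, rfl⟩
    rcases hB.quadMove_mem_or_neg_mem q with h | h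
    · exact Or.inl ⟨h, moveDeg_quadMove q⟩
    · exact Or.inr ⟨h, by rw [← quadMove_swapCols]; exact moveDeg_quadMove _⟩
  · rintro (⟨hz, hdeg⟩ | ⟨hz, hdeg⟩)
    · exact exists_quadMove_eq (hB.1 z hz) hdeg
    · obtain ⟨q, hq⟩ := exists_quadMove_eq (hB.1 _ hz) hdeg
      exact ⟨swapCols q, by rw [quadMove_swapCols, hq, neg_neg]⟩

lemma IsMarkovBasis.neg_notMem_filter_moveDeg_eq_two (hB : IsMarkovBasis n 2 B)
    (hmin : ∀ B' ⊂ B, ¬ IsMarkovBasis n 2 B') {z : (Fin 2 ↪ Fin n) → ℤ}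
    (hz : z ∈ B.filter fun z => moveDeg n 2 z = 2) :
    -z ∉ B.filter fun z => moveDeg n 2 z = 2 := by
  rw [mem_filter] at hz
  refine fun hz' => hB.neg_notMem_of_minimal hmin hz.1 (fun h => ?_) (mem_filter.1 hz').1
  have hzero : z = 0 := by
    ext σ
    have := congrFun h σ
    simp only [Pi.neg_apply, Pi.zero_apply] at this ⊢
    omega
  simp [hzero, moveDeg] at hz

end MinimalMarkovBasis

lemma card_embedding_fin_four (n : ℕ) : Fintype.card (Fin 4 ↪ Fin n) = 24 * n.choose 4 := by
  rw [Fintype.card_embedding_eq, Fintype.card_fin, Fintype.card_fin,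
    Nat.descFactorial_eq_factorial_mul_choose]
  rfl

theorem count_deg_two_moves_r2_general
    (n : ℕ)
    (B : Finset ((Fin 2 ↪ Fin n) → ℤ))
    (hB : IsMarkovBasis n 2 B)
    (hmin : ∀ B' ⊂ B, ¬ IsMarkovBasis n 2 B') :
    (B.filter fun z => moveDeg n 2 z = 2).card = 6 * n.choose 4 := by
  have hmoves := Finset.card_eq_two_mul_of_mem_iff_or_neg_mem hB.mem_image_quadMove_iff
    fun _ => hB.neg_notMem_filter_moveDeg_eq_two hmin
  have hquads := Fintype.card_eq_two_mul_card_image (quadMove (α := Fin n)) swapCells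
    swapCells_ne_self fun _ _ => quadMove_eq_quadMove_iff
  rw [card_embedding_fin_four] at hquads
  omega

/-- **Every minimal Markov basis for A_{n,2} contains exactly 6·C(n,4) moves of degree two.** -/
theorem count_deg_two_moves_r2
    (n : ℕ) (hn : 2 ≤ n)
    (B : Finset ((Fin 2 ↪ Fin n) → ℤ))
    (hB : IsMarkovBasis n 2 B)
    (hmin : ∀ B' ⊂ B, ¬ IsMarkovBasis n 2 B') :
    (B.filter fun z => moveDeg n 2 z = 2).card = 6 * n.choose 4 :=
  count_deg_two_moves_r2_general n B hB hmin
end
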